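/- arXiv:2305.02280 — 6 statements merged into one kernel-verified Lean document; each statement's English description precedes it below -/
import Mathlib

section
/- For every budgeted fair-division instance with two agents and every budget-feasible allocation (X_1, X_2), there exist a budget-feasible allocation (Y_1, Y_2) with Y_1, Y_2 ⊆ X_1 ∪ X_2 that is EFx with respect to budgets, and a labeling {i, j} = {1, 2} of the agents, such that v_i(Y_i) ≥ v_i(X_i) and v_j(Y_j) ≥ (1/2)·v_j(X_j). -/
/-!
STATEMENT 2: For every budgeted fair-division instance with two agents and every
budget-feasible allocation (X₁, X₂), there is a budget-feasible allocation (Y₁, Y₂)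
with Y₁, Y₂ ⊆ X₁ ∪ X₂ that is EFx w.r.t. budgets, and a labeling {i,j} = {1,2}
such that vᵢ(Yᵢ) ≥ vᵢ(Xᵢ) and v_j(Y_j) ≥ (1/2)·v_j(X_j).
-/

open Finset

variable {G : Type*}

/-- Total of an additive function over a bundle. -/
def tot (f : G → ℝ) (S : Finset G) : ℝ := ∑ g ∈ S, f g

/-- `X` is a budget-feasible allocation of (a subset of) the goods in `M`. -/
def IsAlloc {n : ℕ} (M : Finset G) (c : G → ℝ) (B : Fin n → ℝ)
    (X : Fin n → Finset G) : Prop :=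
  (∀ i, X i ⊆ M) ∧ (∀ i j, i ≠ j → Disjoint (X i) (X j)) ∧ (∀ i, tot c (X i) ≤ B i)

/-- EFx with respect to budgets. -/
def IsEFx [DecidableEq G] {n : ℕ} (c : G → ℝ) (B : Fin n → ℝ) (v : Fin n → G → ℝ)
    (X : Fin n → Finset G) : Prop :=
  ∀ i j, ∀ S ⊆ X j, tot c S ≤ B i → ∀ g ∈ S, tot (v i) (S.erase g) ≤ tot (v i) (X i)

/-! ### Auxiliary lemmas -/

lemma tot_mono {f : G → ℝ} {S T : Finset G} (hST : S ⊆ T) (hf : ∀ g ∈ T, 0 ≤ f g) :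
    tot f S ≤ tot f T :=
  Finset.sum_le_sum_of_subset_of_nonneg hST (fun i hi _ => hf i hi)

lemma tot_nonneg {f : G → ℝ} {S : Finset G} (hf : ∀ g ∈ S, 0 ≤ f g) : 0 ≤ tot f S :=
  Finset.sum_nonneg hf

lemma tot_sdiff {f : G → ℝ} {S T : Finset G} [DecidableEq G] (h : S ⊆ T) :
    tot f (T \ S) = tot f T - tot f S := by
  unfold tot
  rw [eq_sub_iff_add_eq, Finset.sum_sdiff h]

/-- Extract an inclusion-minimal subset whose total value exceeds a threshold. -/
lemma exists_min_subset (u : G → ℝ) :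
    ∀ (n : ℕ) (E : Finset G), E.card ≤ n → ∀ thr : ℝ, thr < tot u E →
      ∃ T, T ⊆ E ∧ thr < tot u T ∧ ∀ V ⊂ T, tot u V ≤ thr := by
  intro n
  induction n with
  | zero =>
    intro E hE thr h
    have hE0 : E = ∅ := Finset.card_eq_zero.1 (Nat.le_antisymm hE (Nat.zero_le _))
    subst hE0
    exact ⟨∅, Finset.Subset.refl _, h, fun V hV => absurd hV (Finset.not_ssubset_empty V)⟩
  | succ k ih =>
    intro E hE thr h
    by_cases hex : ∃ V, V ⊂ E ∧ thr < tot u V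
    · obtain ⟨V, hVE, hV⟩ := hex
      have hcard : V.card ≤ k :=
        Nat.lt_succ_iff.mp (lt_of_lt_of_le (Finset.card_lt_card hVE) hE)
      obtain ⟨T, h1, h2, h3⟩ := ih V hcard thr hV
      exact ⟨T, h1.trans hVE.subset, h2, h3⟩
    · push_neg at hex
      exact ⟨E, Finset.Subset.refl _, h, hex⟩

/-- A good pair: disjoint, feasible, mutually EFx-unenvied bundles where the
`u`-agent gets full `u`-value of `Ya` and the `w`-agent gets half of `w(Yb)`. -/
def GoodPair [DecidableEq G] (c u w : G → ℝ) (Ba Bb : ℝ) (Ya Yb Da Db : Finset G) : Prop :=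
  Da ⊆ Ya ∪ Yb ∧ Db ⊆ Ya ∪ Yb ∧ Disjoint Da Db ∧
  tot c Da ≤ Ba ∧ tot c Db ≤ Bb ∧
  (∀ S ⊆ Db, tot c S ≤ Ba → ∀ g ∈ S, tot u (S.erase g) ≤ tot u Da) ∧
  (∀ S ⊆ Da, tot c S ≤ Bb → ∀ g ∈ S, tot w (S.erase g) ≤ tot w Db) ∧
  tot u Ya ≤ tot u Da ∧ tot w Yb ≤ 2 * tot w Db

section Main

variable [DecidableEq G] {c u w : G → ℝ} {Ba Bb : ℝ} {Ya Yb : Finset G}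

/-- The main loop: given `D ⊆ Yb` feasible for agent a, with `u(D) ≥ u(Ya)` and
`2 w(D) ≤ w(Yb)`, a good pair exists. -/
lemma loop_lemma (hc : ∀ g ∈ Ya ∪ Yb, 0 ≤ c g) (hu : ∀ g ∈ Ya ∪ Yb, 0 ≤ u g)
    (hw : ∀ g ∈ Ya ∪ Yb, 0 ≤ w g) (hcb : tot c Yb ≤ Bb) :
    ∀ (n : ℕ) (D : Finset G),
      ((Yb.powerset).filter (fun S => tot u D < tot u S)).card < n →
      D ⊆ Yb → tot c D ≤ Ba → tot u Ya ≤ tot u D → 2 * tot w D ≤ tot w Yb →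
      ∃ Da Db, GoodPair c u w Ba Bb Ya Yb Da Db := by
  have hcYb : ∀ g ∈ Yb, 0 ≤ c g := fun g hg => hc g (Finset.mem_union_right _ hg)
  have huYb : ∀ g ∈ Yb, 0 ≤ u g := fun g hg => hu g (Finset.mem_union_right _ hg)
  have hwYb : ∀ g ∈ Yb, 0 ≤ w g := fun g hg => hw g (Finset.mem_union_right _ hg)
  intro n
  induction n with
  | zero => intro D h; exact absurd h (Nat.not_lt_zero _)
  | succ k ih =>
    intro D hmeas hDYb hcD huD hwD
    by_cases henv : ∃ S ⊆ Yb \ D, tot c S ≤ Ba ∧ ∃ g ∈ S, tot u D < tot u (S.erase g)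
    · obtain ⟨S₀, hS₀sub, hS₀c, g₀, hg₀, hE⟩ := henv
      have hS₀Yb : S₀ ⊆ Yb := hS₀sub.trans (Finset.sdiff_subset)
      obtain ⟨T, hTE, hTgt, hTmin⟩ :=
        exists_min_subset u (S₀.erase g₀).card (S₀.erase g₀) le_rfl (tot u D) hE
      have hTS₀ : T ⊆ S₀ := hTE.trans (Finset.erase_subset _ _)
      have hTYbD : T ⊆ Yb \ D := hTS₀.trans hS₀sub
      have hTYb : T ⊆ Yb := hTYbD.trans (Finset.sdiff_subset)
      have hcT : tot c T ≤ Ba :=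
        le_trans (tot_mono hTS₀ (fun g hg => hcYb g (hS₀Yb hg))) hS₀c
      have hDdisjT : Disjoint D T := by
        rw [Finset.disjoint_left]
        intro a haD haT
        exact (Finset.mem_sdiff.1 (hTYbD haT)).2 haD
      by_cases hbig : tot w Yb ≤ 2 * tot w T
      · -- output (D, T)
        refine ⟨D, T, hDYb.trans Finset.subset_union_right,
          hTYb.trans Finset.subset_union_right, hDdisjT, hcD,
          le_trans (tot_mono hTYb hcYb) hcb, ?_, ?_, huD, hbig⟩
        · -- a does not envy T
          intro S hST hcS g hg
          have hsub : S.erase g ⊆ T := (Finset.erase_subset _ _).trans hST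
          have hss : S.erase g ⊂ T :=
            (Finset.ssubset_iff_of_subset hsub).2 ⟨g, hST hg, Finset.notMem_erase g S⟩
          exact hTmin _ hss
        · -- b does not envy D
          intro S hSD hcS g hg
          have h1 : tot w (S.erase g) ≤ tot w D :=
            tot_mono ((Finset.erase_subset _ _).trans hSD)
              (fun g hg => hwYb g (hDYb hg))
          linarith
      · -- recurse with D := T
        push_neg at hbig
        have hmeasT : ((Yb.powerset).filter (fun S => tot u T < tot u S)).card < k := by
          have hsub : (Yb.powerset).filter (fun S => tot u T < tot u S) ⊆
              (Yb.powerset).filter (fun S => tot u D < tot u S) := by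
            intro S hS
            rw [Finset.mem_filter] at hS ⊢
            exact ⟨hS.1, lt_trans hTgt hS.2⟩
          have hmem : T ∈ (Yb.powerset).filter (fun S => tot u D < tot u S) := by
            rw [Finset.mem_filter, Finset.mem_powerset]
            exact ⟨hTYb, hTgt⟩
          have hnot : T ∉ (Yb.powerset).filter (fun S => tot u T < tot u S) := by
            rw [Finset.mem_filter]
            exact fun h => lt_irrefl _ h.2
          have hlt : ((Yb.powerset).filter (fun S => tot u T < tot u S)).card <
              ((Yb.powerset).filter (fun S => tot u D < tot u S)).card :=
            Finset.card_lt_card ⟨hsub, fun hcon => hnot (hcon hmem)⟩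
          omega
        exact ih T hmeasT hTYb hcT (le_of_lt (lt_of_le_of_lt huD hTgt)) (le_of_lt hbig)
    · -- output (D, Yb \ D)
      push_neg at henv
      have hsd : tot w (Yb \ D) = tot w Yb - tot w D := tot_sdiff hDYb
      refine ⟨D, Yb \ D, hDYb.trans Finset.subset_union_right,
        (Finset.sdiff_subset).trans Finset.subset_union_right, ?_, hcD,
        le_trans (tot_mono Finset.sdiff_subset hcYb) hcb, henv, ?_, huD, by linarith⟩
      · rw [Finset.disjoint_left]
        intro a haD haS
        exact (Finset.mem_sdiff.1 haS).2 haD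
      · -- b does not envy D
        intro S hSD hcS g hg
        have h1 : tot w (S.erase g) ≤ tot w D :=
          tot_mono ((Finset.erase_subset _ _).trans hSD)
            (fun g hg => hwYb g (hDYb hg))
        linarith

/-- Main lemma: if agent a EFx-envies `Yb`, then a good pair exists. -/
lemma main_lemma (hc : ∀ g ∈ Ya ∪ Yb, 0 ≤ c g) (hu : ∀ g ∈ Ya ∪ Yb, 0 ≤ u g)
    (hw : ∀ g ∈ Ya ∪ Yb, 0 ≤ w g) (hdisj : Disjoint Ya Yb)
    (hca : tot c Ya ≤ Ba) (hcb : tot c Yb ≤ Bb)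
    (henvy : ∃ S ⊆ Yb, tot c S ≤ Ba ∧ ∃ g ∈ S, tot u Ya < tot u (S.erase g)) :
    ∃ Da Db, GoodPair c u w Ba Bb Ya Yb Da Db := by
  have hcYb : ∀ g ∈ Yb, 0 ≤ c g := fun g hg => hc g (Finset.mem_union_right _ hg)
  have huYa : ∀ g ∈ Ya, 0 ≤ u g := fun g hg => hu g (Finset.mem_union_left _ hg)
  have hwYa : ∀ g ∈ Ya, 0 ≤ w g := fun g hg => hw g (Finset.mem_union_left _ hg)
  have hwYb : ∀ g ∈ Yb, 0 ≤ w g := fun g hg => hw g (Finset.mem_union_right _ hg)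
  obtain ⟨S₁, hS₁Yb, hS₁c, g₁, hg₁, hT1⟩ := henvy
  obtain ⟨D₀, hD₀T1, hD₀gt, hD₀min⟩ :=
    exists_min_subset u (S₁.erase g₁).card (S₁.erase g₁) le_rfl (tot u Ya) hT1
  have hD₀S₁ : D₀ ⊆ S₁ := hD₀T1.trans (Finset.erase_subset _ _)
  have hD₀Yb : D₀ ⊆ Yb := hD₀S₁.trans hS₁Yb
  have hcD₀ : tot c D₀ ≤ Ba :=
    le_trans (tot_mono hD₀S₁ (fun g hg => hcYb g (hS₁Yb hg))) hS₁c
  have hcD₀b : tot c D₀ ≤ Bb := le_trans (tot_mono hD₀Yb hcYb) hcb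
  by_cases h2 : 2 * tot w D₀ ≤ tot w Yb
  · exact loop_lemma hc hu hw hcb
      (((Yb.powerset).filter (fun S => tot u D₀ < tot u S)).card + 1) D₀
      (Nat.lt_succ_self _) hD₀Yb hcD₀ (le_of_lt hD₀gt) h2
  · push_neg at h2
    by_cases h3 : ∃ S ⊆ Ya, tot c S ≤ Bb ∧ ∃ g ∈ S, tot w D₀ < tot w (S.erase g)
    · -- output (D₀, Tb)
      obtain ⟨S₂, hS₂Ya, hS₂c, g₂, hg₂, hTb⟩ := h3
      set Tb := S₂.erase g₂ with hTbdef
      have hTbYa : Tb ⊆ Ya := (Finset.erase_subset _ _).trans hS₂Ya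
      have hcTb : tot c Tb ≤ Bb :=
        le_trans (tot_mono (Finset.erase_subset _ _)
          (fun g hg => hc g (Finset.mem_union_left _ (hS₂Ya hg)))) hS₂c
      refine ⟨D₀, Tb, hD₀Yb.trans Finset.subset_union_right,
        hTbYa.trans Finset.subset_union_left, ?_, hcD₀, hcTb, ?_, ?_,
        le_of_lt hD₀gt, by linarith⟩
      · exact Finset.disjoint_of_subset_left hD₀Yb
          (Finset.disjoint_of_subset_right hTbYa hdisj.symm)
      · -- a does not envy Tb
        intro S hSTb hcS g hg
        have h1 : tot u (S.erase g) ≤ tot u Tb :=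
          tot_mono ((Finset.erase_subset _ _).trans hSTb)
            (fun g hg => huYa g (hTbYa hg))
        have h2' : tot u Tb ≤ tot u Ya := tot_mono hTbYa huYa
        linarith
      · -- b does not envy D₀
        intro S hSD hcS g hg
        have h1 : tot w (S.erase g) ≤ tot w D₀ :=
          tot_mono ((Finset.erase_subset _ _).trans hSD)
            (fun g hg => hwYb g (hD₀Yb hg))
        linarith
    · -- output (Ya, D₀)
      push_neg at h3
      refine ⟨Ya, D₀, Finset.subset_union_left,
        hD₀Yb.trans Finset.subset_union_right,
        Finset.disjoint_of_subset_right hD₀Yb hdisj, hca, hcD₀b, ?_, h3,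
        le_refl _, by linarith⟩
      -- a does not envy D₀
      intro S hSD hcS g hg
      have hsub : S.erase g ⊆ D₀ := (Finset.erase_subset _ _).trans hSD
      have hss : S.erase g ⊂ D₀ :=
        (Finset.ssubset_iff_of_subset hsub).2 ⟨g, hSD hg, Finset.notMem_erase g S⟩
      exact hD₀min _ hss

end Main

theorem efx_two_agents [DecidableEq G] (M : Finset G) (c : G → ℝ) (B : Fin 2 → ℝ)
    (v : Fin 2 → G → ℝ)
    (hc : ∀ g ∈ M, 0 ≤ c g) (hB : ∀ i, 0 ≤ B i) (hv : ∀ i, ∀ g ∈ M, 0 ≤ v i g)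
    (X : Fin 2 → Finset G) (hX : IsAlloc M c B X) :
    ∃ Y : Fin 2 → Finset G,
      (∀ i, Y i ⊆ X 0 ∪ X 1) ∧
      IsAlloc M c B Y ∧
      IsEFx c B v Y ∧
      ∃ i j : Fin 2, i ≠ j ∧
        tot (v i) (X i) ≤ tot (v i) (Y i) ∧
        (1 / 2) * tot (v j) (X j) ≤ tot (v j) (Y j) := by
  obtain ⟨hXM, hXdisj, hXB⟩ := hX
  have hUM : X 0 ∪ X 1 ⊆ M := Finset.union_subset (hXM 0) (hXM 1)
  have hcU : ∀ g ∈ X 0 ∪ X 1, 0 ≤ c g := fun g hg => hc g (hUM hg)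
  have hv0U : ∀ g ∈ X 0 ∪ X 1, 0 ≤ v 0 g := fun g hg => hv 0 g (hUM hg)
  have hv1U : ∀ g ∈ X 0 ∪ X 1, 0 ≤ v 1 g := fun g hg => hv 1 g (hUM hg)
  have hdisj01 : Disjoint (X 0) (X 1) := hXdisj 0 1 (by decide)
  -- helper to package a good pair into the final statement
  have pack : ∀ (D0 D1 : Finset G), D0 ⊆ X 0 ∪ X 1 → D1 ⊆ X 0 ∪ X 1 →
      Disjoint D0 D1 → tot c D0 ≤ B 0 → tot c D1 ≤ B 1 →
      (∀ S ⊆ D1, tot c S ≤ B 0 → ∀ g ∈ S, tot (v 0) (S.erase g) ≤ tot (v 0) D0) →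
      (∀ S ⊆ D0, tot c S ≤ B 1 → ∀ g ∈ S, tot (v 1) (S.erase g) ≤ tot (v 1) D1) →
      ∃ Y : Fin 2 → Finset G,
        (∀ i, Y i ⊆ X 0 ∪ X 1) ∧ IsAlloc M c B Y ∧ IsEFx c B v Y ∧
        Y 0 = D0 ∧ Y 1 = D1 := by
    intro D0 D1 h0U h1U hdisj hB0 hB1 hne0 hne1
    refine ⟨fun k => if k = 0 then D0 else D1, ?_, ⟨?_, ?_, ?_⟩, ?_, rfl, rfl⟩
    · intro i
      fin_cases i
      · exact h0U
      · exact h1U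
    · intro i
      fin_cases i
      · exact h0U.trans hUM
      · exact h1U.trans hUM
    · intro i j hij
      fin_cases i <;> fin_cases j
      · exact absurd rfl hij
      · exact hdisj
      · exact hdisj.symm
      · exact absurd rfl hij
    · intro i
      fin_cases i
      · exact hB0
      · exact hB1
    · intro i j S hS hcS g hg
      fin_cases i <;> fin_cases j
      · exact tot_mono ((Finset.erase_subset _ _).trans hS)
          (fun x hx => hv 0 x (hUM (h0U hx)))
      · exact hne0 S hS hcS g hg
      · exact hne1 S hS hcS g hg
      · exact tot_mono ((Finset.erase_subset _ _).trans hS)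
          (fun x hx => hv 1 x (hUM (h1U hx)))
  by_cases hE0 : ∃ S ⊆ X 1, tot c S ≤ B 0 ∧ ∃ g ∈ S, tot (v 0) (X 0) < tot (v 0) (S.erase g)
  · obtain ⟨Da, Db, h0, h1, hd, hb0, hb1, hne0, hne1, hfull, hhalf⟩ :=
      main_lemma (c := c) (u := v 0) (w := v 1) (Ba := B 0) (Bb := B 1)
        (Ya := X 0) (Yb := X 1) hcU hv0U hv1U hdisj01 (hXB 0) (hXB 1) hE0
    obtain ⟨Y, hYU, hYalloc, hYefx, hY0, hY1⟩ :=
      pack Da Db h0 h1 hd hb0 hb1 hne0 hne1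
    refine ⟨Y, hYU, hYalloc, hYefx, 0, 1, by decide, ?_, ?_⟩
    · rw [hY0]; exact hfull
    · rw [hY1]; linarith
  · by_cases hE1 : ∃ S ⊆ X 0, tot c S ≤ B 1 ∧ ∃ g ∈ S, tot (v 1) (X 1) < tot (v 1) (S.erase g)
    · have hcU' : ∀ g ∈ X 1 ∪ X 0, 0 ≤ c g := by rw [Finset.union_comm]; exact hcU
      have hv0U' : ∀ g ∈ X 1 ∪ X 0, 0 ≤ v 0 g := by rw [Finset.union_comm]; exact hv0U
      have hv1U' : ∀ g ∈ X 1 ∪ X 0, 0 ≤ v 1 g := by rw [Finset.union_comm]; exact hv1U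
      obtain ⟨Da, Db, h0, h1, hd, hb0, hb1, hne0, hne1, hfull, hhalf⟩ :=
        main_lemma (c := c) (u := v 1) (w := v 0) (Ba := B 1) (Bb := B 0)
          (Ya := X 1) (Yb := X 0) hcU' hv1U' hv0U' hdisj01.symm (hXB 1) (hXB 0) hE1
      rw [Finset.union_comm] at h0 h1
      obtain ⟨Y, hYU, hYalloc, hYefx, hY0, hY1⟩ :=
        pack Db Da h1 h0 hd.symm hb1 hb0 hne1 hne0
      refine ⟨Y, hYU, hYalloc, hYefx, 1, 0, by decide, ?_, ?_⟩
      · rw [hY1]; exact hfull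
      · rw [hY0]; linarith
    · -- X itself is EFx
      push_neg at hE0 hE1
      refine ⟨X, ?_, ⟨hXM, hXdisj, hXB⟩, ?_, 0, 1, by decide, le_refl _, ?_⟩
      · intro i
        fin_cases i
        · exact Finset.subset_union_left
        · exact Finset.subset_union_right
      · intro i j S hS hcS g hg
        fin_cases i <;> fin_cases j
        · exact tot_mono ((Finset.erase_subset _ _).trans hS)
            (fun x hx => hv 0 x (hXM 0 hx))
        · exact hE0 S hS hcS g hg
        · exact hE1 S hS hcS g hg
        · exact tot_mono ((Finset.erase_subset _ _).trans hS)
            (fun x hx => hv 1 x (hXM 1 hx))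
      · have h0 : 0 ≤ tot (v 1) (X 1) := tot_nonneg (fun g hg => hv 1 g (hXM 1 hg))
        linarith
end

section
/- Consider a budgeted fair-division instance with three agents, let OPT = (OPT_1, OPT_2, OPT_3) be a budget-feasible allocation maximizing the Nash social welfare, and for each agent i let F_i = {g ∈ M : c(g) ≤ B_i} be her budget-feasible goods; assume |F_i| ≥ 3 and let S_i ⊆ F_i be a set of 3 goods satisfying v_i(g) ≥ v_i(h) for all g ∈ S_i and h ∈ F_i \ S_i (a set of i's three favorite budget-feasible goods). Then there exist three pairwise distinct goods s_1, s_2, s_3 with s_i ∈ S_i for each i, such that (a) for every agent i with S_i ∩ OPT_i ≠ ∅ one has v_i(s_i) ≥ max_{g ∈ S_i ∩ OPT_i} v_i(g), and (b) for every agent i and every good g ∈ M \ {s_1, s_2, s_3}, v_i(s_i) ≥ v^max_i({g}). -/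
/-!
STATEMENT 6: Pre-processing for three agents.  Given a maximum-Nash-welfare
budget-feasible allocation OPT, with F_i the budget-feasible goods of agent i
(|F_i| ≥ 3) and S_i ⊆ F_i a set of i's three favorite budget-feasible goods,
there exist pairwise distinct goods s_i ∈ S_i such that
(a) every agent i with S_i ∩ OPT_i ≠ ∅ has v_i(s_i) ≥ max_{g ∈ S_i ∩ OPT_i} v_i(g), and
(b) for all i and all g ∈ M \ {s₁,s₂,s₃}, v_i(s_i) ≥ v^max_i({g}).
-/

open Finset

variable {G : Type*}

/-- Nash social welfare of an `n`-agent allocation. -/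
noncomputable def NSW {n : ℕ} (v : Fin n → G → ℝ) (X : Fin n → Finset G) : ℝ :=
  (∏ i, tot (v i) (X i)) ^ ((1 : ℝ) / n)

/-- `vmax c B v X` is the maximum value `tot v S` over subsets `S ⊆ X` with cost
`tot c S ≤ B`. -/
noncomputable def vmax (c : G → ℝ) (B : ℝ) (v : G → ℝ) (X : Finset G) : ℝ :=
  sSup {x : ℝ | ∃ S ⊆ X, tot c S ≤ B ∧ tot v S = x}


lemma cycle_exists : ∀ (U : Finset (Fin 3)) (f : Fin 3 → Fin 3), (∀ i ∈ U, f i ∈ U) →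
    U.Nonempty →
    ∃ C : Finset (Fin 3), C ⊆ U ∧ C.Nonempty ∧ (∀ i ∈ C, f i ∈ C) ∧
      (∀ i ∈ C, ∀ j ∈ C, f i = f j → i = j) := by decide

lemma select {G : Type*} [DecidableEq G] [Nonempty G] (v : Fin 3 → G → ℝ)
    (S Own : Fin 3 → Finset G)
    (hdisj : ∀ i j, i ≠ j → Disjoint (Own i) (Own j)) :
    ∀ (n : ℕ) (U : Finset (Fin 3)) (P : Finset G), U.card = n →
      (∀ i ∈ U, U.card ≤ (S i \ P).card) →
      (∀ i ∈ U, Disjoint (Own i) P) →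
      ∃ s : Fin 3 → G,
        (∀ i ∈ U, s i ∈ S i \ P) ∧
        (∀ i ∈ U, ∀ j ∈ U, i ≠ j → s i ≠ s j) ∧
        (∀ i ∈ U, ∀ g ∈ S i, v i (s i) < v i g →
          (g ∈ P ∨ ∃ j ∈ U, j ≠ i ∧ g = s j) ∧ g ∉ Own i) := by
  intro n
  induction n using Nat.strong_induction_on with
  | _ n IH =>
    intro U P hn hcard hinv
    rcases U.eq_empty_or_nonempty with rfl | hU
    · exact ⟨fun _ => Classical.arbitrary G, by simp, by simp, by simp⟩
    -- pick each agent's favorite available good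
    have hmaxex : ∀ i : Fin 3, ∃ g : G, i ∈ U →
        g ∈ S i \ P ∧ ∀ h ∈ S i \ P, v i h ≤ v i g := by
      intro i
      by_cases hi : i ∈ U
      · have hne : (S i \ P).Nonempty := by
          rw [← Finset.card_pos]
          exact lt_of_lt_of_le (Finset.card_pos.2 hU) (hcard i hi)
        obtain ⟨b, hb, hbmax⟩ := Finset.exists_max_image (S i \ P) (v i) hne
        exact ⟨b, fun _ => ⟨hb, hbmax⟩⟩
      · exact ⟨Classical.arbitrary G, fun h => absurd h hi⟩
    choose t ht using hmaxex
    -- find a resolvable set C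
    have hC : ∃ C : Finset (Fin 3), C ⊆ U ∧ C.Nonempty ∧
        (∀ i ∈ C, ∀ j ∈ C, i ≠ j → t i ≠ t j) ∧
        (∀ i ∈ C, ∀ j ∈ U, j ∉ C → t i ∉ Own j) := by
      by_cases hA : ∃ i ∈ U, ∀ j ∈ U, j ≠ i → t i ∉ Own j
      · obtain ⟨i0, hi0, h0⟩ := hA
        refine ⟨{i0}, by simpa using hi0, ⟨i0, mem_singleton_self i0⟩, ?_, ?_⟩
        · intro i hi j hj hne
          simp only [mem_singleton] at hi hj
          exact absurd (hi.trans hj.symm) hne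
        · intro i hi j hjU hjC
          simp only [mem_singleton] at hi hjC
          subst hi
          exact h0 j hjU (fun h => hjC h)
      · push_neg at hA
        have hfex : ∀ i : Fin 3, ∃ j : Fin 3, i ∈ U → (j ∈ U ∧ j ≠ i ∧ t i ∈ Own j) := by
          intro i
          by_cases hi : i ∈ U
          · obtain ⟨j, hj, hji, hmem⟩ := hA i hi
            exact ⟨j, fun _ => ⟨hj, hji, hmem⟩⟩
          · exact ⟨i, fun h => absurd h hi⟩
        choose f hf using hfex
        obtain ⟨C, hCU, hCne, hCcl, hCinj⟩ :=
          cycle_exists U f (fun i hi => (hf i hi).1) hU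
        refine ⟨C, hCU, hCne, ?_, ?_⟩
        · intro i hi j hj hne hteq
          have h1 := hf i (hCU hi)
          have h2 := hf j (hCU hj)
          have hff : f i = f j := by
            by_contra hff
            exact (Finset.disjoint_left.1 (hdisj _ _ hff)) h1.2.2 (hteq ▸ h2.2.2)
          exact hne (hCinj i hi j hj hff)
        · intro i hi j hjU hjC hmem
          have h1 := hf i (hCU hi)
          have hfij : f i ≠ j := fun h => hjC (h ▸ hCcl i hi)
          exact (Finset.disjoint_left.1 (hdisj _ _ hfij)) h1.2.2 hmem
    obtain ⟨C, hCU, hCne, htinj, hout⟩ := hC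
    -- recurse on the rest
    have hsplit : ∀ i : Fin 3, S i \ (P ∪ C.image t) = (S i \ P) \ C.image t := by
      intro i; ext x; simp only [mem_sdiff, mem_union]; tauto
    have hcard' : ∀ i ∈ U \ C, (U \ C).card ≤ (S i \ (P ∪ C.image t)).card := by
      intro i hi
      have hiU : i ∈ U := (Finset.mem_sdiff.1 hi).1
      calc (U \ C).card = U.card - C.card := Finset.card_sdiff_of_subset hCU
        _ ≤ (S i \ P).card - (C.image t).card :=
            tsub_le_tsub (hcard i hiU) Finset.card_image_le
        _ ≤ ((S i \ P) \ C.image t).card := Finset.le_card_sdiff _ _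
        _ = (S i \ (P ∪ C.image t)).card := by rw [hsplit]
    have hinv' : ∀ i ∈ U \ C, Disjoint (Own i) (P ∪ C.image t) := by
      intro i hi
      obtain ⟨hiU, hiC⟩ := Finset.mem_sdiff.1 hi
      refine Finset.disjoint_union_right.2 ⟨hinv i hiU, ?_⟩
      rw [Finset.disjoint_right]
      intro g hg
      obtain ⟨j, hjC, rfl⟩ := Finset.mem_image.1 hg
      exact hout j hjC i hiU hiC
    have hlt : (U \ C).card < n := by
      rw [Finset.card_sdiff_of_subset hCU, ← hn]
      have h1 : 0 < C.card := Finset.card_pos.2 hCne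
      have h2 : C.card ≤ U.card := Finset.card_le_card hCU
      have h3 : 0 < U.card := Finset.card_pos.2 hU
      omega
    obtain ⟨s', hmem', hdist', hprop'⟩ :=
      IH (U \ C).card hlt (U \ C) (P ∪ C.image t) rfl hcard' hinv'
    refine ⟨fun i => if i ∈ C then t i else s' i, ?_, ?_, ?_⟩
    · intro i hi
      by_cases hiC : i ∈ C
      · simpa [hiC] using (ht i hi).1
      · have hi' : i ∈ U \ C := Finset.mem_sdiff.2 ⟨hi, hiC⟩
        have := hmem' i hi'
        rw [hsplit i] at this
        have := Finset.mem_sdiff.1 this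
        simpa [hiC] using this.1
    · intro i hi j hj hne
      by_cases hiC : i ∈ C <;> by_cases hjC : j ∈ C
      · simpa [hiC, hjC] using htinj i hiC j hjC hne
      · have hj' : j ∈ U \ C := Finset.mem_sdiff.2 ⟨hj, hjC⟩
        have hs'j := hmem' j hj'
        simp only [hiC, hjC, if_true, if_false]
        intro heq
        have : s' j ∉ P ∪ C.image t := (Finset.mem_sdiff.1 hs'j).2
        exact this (Finset.mem_union_right _ (Finset.mem_image.2 ⟨i, hiC, heq⟩))
      · have hi' : i ∈ U \ C := Finset.mem_sdiff.2 ⟨hi, hiC⟩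
        have hs'i := hmem' i hi'
        simp only [hiC, hjC, if_true, if_false]
        intro heq
        have : s' i ∉ P ∪ C.image t := (Finset.mem_sdiff.1 hs'i).2
        exact this (Finset.mem_union_right _ (Finset.mem_image.2 ⟨j, hjC, heq.symm⟩))
      · simpa [hiC, hjC] using
          hdist' i (Finset.mem_sdiff.2 ⟨hi, hiC⟩) j (Finset.mem_sdiff.2 ⟨hj, hjC⟩) hne
    · intro i hi g hg hvlt
      by_cases hiC : i ∈ C
      · replace hvlt : v i (t i) < v i g := by simpa [hiC] using hvlt
        have hgP : g ∈ P := by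
          by_contra hgP
          exact absurd ((ht i hi).2 g (Finset.mem_sdiff.2 ⟨hg, hgP⟩)) (not_le.2 hvlt)
        exact ⟨Or.inl hgP, fun hgO => (Finset.disjoint_left.1 (hinv i hi)) hgO hgP⟩
      · replace hvlt : v i (s' i) < v i g := by simpa [hiC] using hvlt
        have hi' : i ∈ U \ C := Finset.mem_sdiff.2 ⟨hi, hiC⟩
        obtain ⟨hcase, hgO⟩ := hprop' i hi' g hg hvlt
        refine ⟨?_, hgO⟩
        rcases hcase with hgP' | ⟨j, hj', hji, rfl⟩
        · rcases Finset.mem_union.1 hgP' with hgP | hgT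
          · exact Or.inl hgP
          · obtain ⟨j, hjC, rfl⟩ := Finset.mem_image.1 hgT
            exact Or.inr ⟨j, hCU hjC, fun h => hiC (h ▸ hjC), by simp [hjC]⟩
        · have hjC : j ∉ C := (Finset.mem_sdiff.1 hj').2
          exact Or.inr ⟨j, (Finset.mem_sdiff.1 hj').1, hji, by simp [hjC]⟩

theorem preprocessing_three_agents [DecidableEq G] (M : Finset G) (c : G → ℝ)
    (B : Fin 3 → ℝ) (v : Fin 3 → G → ℝ)
    (hc : ∀ g ∈ M, 0 ≤ c g) (hB : ∀ i, 0 ≤ B i) (hv : ∀ i, ∀ g ∈ M, 0 ≤ v i g)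
    (OPT : Fin 3 → Finset G) (hOPT : IsAlloc M c B OPT)
    (hOPTmax : ∀ X : Fin 3 → Finset G, IsAlloc M c B X → NSW v X ≤ NSW v OPT)
    -- F i is the set of budget-feasible goods of agent i
    (F : Fin 3 → Finset G) (hF : ∀ i, ∀ g, g ∈ F i ↔ g ∈ M ∧ c g ≤ B i)
    (hFcard : ∀ i, 3 ≤ (F i).card)
    -- S i is a set of i's three favorite budget-feasible goods
    (S : Fin 3 → Finset G) (hSF : ∀ i, S i ⊆ F i) (hScard : ∀ i, (S i).card = 3)
    (hSfav : ∀ i, ∀ g ∈ S i, ∀ h ∈ F i \ S i, v i h ≤ v i g) :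
    ∃ s : Fin 3 → G,
      (∀ i j, i ≠ j → s i ≠ s j) ∧
      (∀ i, s i ∈ S i) ∧
      -- (a): agents with a favorite good in their OPT bundle keep at least that value
      (∀ i, ∀ g ∈ S i ∩ OPT i, v i g ≤ v i (s i)) ∧
      -- (b): the set-aside good dominates every remaining good
      (∀ i, ∀ g ∈ M \ ({s 0, s 1, s 2} : Finset G), vmax c (B i) (v i) {g} ≤ v i (s i)) := by

  have hS0 : (S 0).Nonempty := Finset.card_pos.1 (by rw [hScard]; omega)
  haveI : Nonempty G := ⟨hS0.choose⟩
  obtain ⟨-, hOPTd, -⟩ := hOPT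
  obtain ⟨s, hmem, hdist, hprop⟩ :=
    select v S (fun i => S i ∩ OPT i)
      (fun i j hij =>
        ((hOPTd i j hij).mono Finset.inter_subset_right Finset.inter_subset_right))
      3 Finset.univ ∅ (by simp)
      (by intro i _; simp [hScard i])
      (by intro i _; simp)
  have hsS : ∀ i, s i ∈ S i := by
    intro i
    simpa using hmem i (Finset.mem_univ i)
  have hsM : ∀ i, s i ∈ M := fun i => ((hF i (s i)).1 (hSF i (hsS i))).1
  refine ⟨s, fun i j hij => hdist i (Finset.mem_univ i) j (Finset.mem_univ j) hij, hsS, ?_, ?_⟩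
  · intro i g hg
    by_contra hlt
    push_neg at hlt
    exact (hprop i (Finset.mem_univ i) g (Finset.mem_inter.1 hg).1 hlt).2 hg
  · intro i g hg
    obtain ⟨hgM, hgns⟩ := Finset.mem_sdiff.1 hg
    rw [vmax]
    apply Real.sSup_le _ (hv i (s i) (hsM i))
    rintro x ⟨T, hT, hTc, rfl⟩
    simp only [tot] at hTc ⊢
    rcases Finset.subset_singleton_iff.1 hT with rfl | rfl
    · simpa using hv i (s i) (hsM i)
    · rw [Finset.sum_singleton] at hTc ⊢
      have hgF : g ∈ F i := (hF i g).2 ⟨hgM, hTc⟩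
      by_cases hgS : g ∈ S i
      · by_contra hlt
        push_neg at hlt
        rcases (hprop i (Finset.mem_univ i) g hgS hlt).1 with h | ⟨j, _, _, rfl⟩
        · simp at h
        · refine hgns ?_
          fin_cases j <;> simp
      · exact hSfav i (s i) (hsS i) g (Finset.mem_sdiff.2 ⟨hgF, hgS⟩)
end

section
/- Consider a budgeted fair-division instance with three agents, let OPT = (OPT_1, OPT_2, OPT_3) be a budget-feasible allocation maximizing the Nash social welfare, and let s_1, s_2, s_3 ∈ M be pairwise distinct goods such that for each agent i and every g ∈ {s_1, s_2, s_3} ∩ OPT_i one has v_i(g) ≤ v_i(s_i). Then there exist a budget-feasible allocation Y = (Y_1, Y_2, Y_3) of the remaining goods M \ {s_1, s_2, s_3} and a labeling (i, j, k) of the three agents such that at least one of the following holds: (1) v_i(Y_i) ≥ v_i(OPT_i) − 3·v_i(s_i), v_j(Y_j) ≥ v_j(OPT_j), and v_k(Y_k) ≥ v_k(OPT_k); (2) v_i(Y_i) ≥ v_i(OPT_i) − 2·v_i(s_i), v_j(Y_j) ≥ v_j(OPT_j) − v_j(s_j), and v_k(Y_k) ≥ v_k(OPT_k); (3) v_a(Y_a)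 ≥ v_a(OPT_a) − v_a(s_a) for every agent a. -/
/-!
STATEMENT 7: Given a maximum-Nash-welfare budget-feasible allocation OPT for three
agents and pairwise distinct set-aside goods s₁, s₂, s₃ such that each agent i values
s_i at least as much as any set-aside good lying in her own OPT bundle, there is a
budget-feasible allocation Y of the remaining goods M \ {s₁,s₂,s₃} and a labeling
(i,j,k) of the agents such that one of the three listed value-loss patterns holds.
-/

open Finset

variable {G : Type*}

theorem remaining_value_three_agents [DecidableEq G] (M : Finset G) (c : G → ℝ)
    (B : Fin 3 → ℝ) (v : Fin 3 → G → ℝ)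
    (hc : ∀ g ∈ M, 0 ≤ c g) (hB : ∀ i, 0 ≤ B i) (hv : ∀ i, ∀ g ∈ M, 0 ≤ v i g)
    (OPT : Fin 3 → Finset G) (hOPT : IsAlloc M c B OPT)
    (hOPTmax : ∀ X : Fin 3 → Finset G, IsAlloc M c B X → NSW v X ≤ NSW v OPT)
    (s : Fin 3 → G) (hsM : ∀ i, s i ∈ M) (hsdist : ∀ i j, i ≠ j → s i ≠ s j)
    (hsfav : ∀ i, ∀ g ∈ ({s 0, s 1, s 2} : Finset G) ∩ OPT i, v i g ≤ v i (s i)) :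
    ∃ Y : Fin 3 → Finset G,
      IsAlloc (M \ ({s 0, s 1, s 2} : Finset G)) c B Y ∧
      ∃ σ : Equiv.Perm (Fin 3),
        (tot (v (σ 0)) (OPT (σ 0)) - 3 * v (σ 0) (s (σ 0)) ≤ tot (v (σ 0)) (Y (σ 0)) ∧
          tot (v (σ 1)) (OPT (σ 1)) ≤ tot (v (σ 1)) (Y (σ 1)) ∧
          tot (v (σ 2)) (OPT (σ 2)) ≤ tot (v (σ 2)) (Y (σ 2))) ∨
        (tot (v (σ 0)) (OPT (σ 0)) - 2 * v (σ 0) (s (σ 0)) ≤ tot (v (σ 0)) (Y (σ 0)) ∧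
          tot (v (σ 1)) (OPT (σ 1)) - v (σ 1) (s (σ 1)) ≤ tot (v (σ 1)) (Y (σ 1)) ∧
          tot (v (σ 2)) (OPT (σ 2)) ≤ tot (v (σ 2)) (Y (σ 2))) ∨
        (∀ a : Fin 3, tot (v a) (OPT a) - v a (s a) ≤ tot (v a) (Y a)) := by
  classical
  set S : Finset G := {s 0, s 1, s 2} with hS
  set Y : Fin 3 → Finset G := fun a => OPT a \ S with hY
  obtain ⟨hsub, hdisj, hbud⟩ := hOPT
  have hYalloc : IsAlloc (M \ S) c B Y := by
    refine ⟨fun a => Finset.sdiff_subset_sdiff (hsub a) le_rfl,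
      fun i j hij => (hdisj i j hij).mono Finset.sdiff_subset Finset.sdiff_subset,
      fun a => le_trans ?_ (hbud a)⟩
    exact Finset.sum_le_sum_of_subset_of_nonneg Finset.sdiff_subset
      (fun g hg _ => hc g (hsub a hg))
  set n : Fin 3 → ℕ := fun a => (OPT a ∩ S).card with hn
  have vnn : ∀ a, 0 ≤ v a (s a) := fun a => hv a (s a) (hsM a)
  have key : ∀ a, tot (v a) (OPT a) - (n a : ℝ) * v a (s a) ≤ tot (v a) (Y a) := by
    intro a
    have hsplit : tot (v a) (OPT a ∩ S) + tot (v a) (Y a) = tot (v a) (OPT a) :=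
      Finset.sum_inter_add_sum_sdiff _ _ _
    have hbound : tot (v a) (OPT a ∩ S) ≤ (n a : ℝ) * v a (s a) := by
      have := Finset.sum_le_card_nsmul (OPT a ∩ S) (v a) (v a (s a))
        (fun g hg => hsfav a g (by rw [Finset.inter_comm]; exact hg))
      simpa [tot, nsmul_eq_mul] using this
    linarith
  have step : ∀ a : Fin 3, ∀ m : ℕ, n a ≤ m →
      tot (v a) (OPT a) - (m : ℝ) * v a (s a) ≤ tot (v a) (Y a) := by
    intro a m hm
    refine le_trans ?_ (key a)
    have h1 : ((n a : ℝ)) ≤ (m : ℝ) := Nat.cast_le.2 hm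
    nlinarith [vnn a]
  have step0 : ∀ a : Fin 3, n a = 0 → tot (v a) (OPT a) ≤ tot (v a) (Y a) := by
    intro a ha
    have := step a 0 (le_of_eq ha)
    simpa using this
  -- sum of counts is at most 3
  have hSc : S.card ≤ 3 := by
    calc S.card ≤ ({s 1, s 2} : Finset G).card + 1 := Finset.card_insert_le _ _
    _ ≤ (({s 2} : Finset G).card + 1) + 1 := by
        exact Nat.add_le_add_right (Finset.card_insert_le _ _) 1
    _ = 3 := by simp
  have hsum : n 0 + n 1 + n 2 ≤ 3 := by
    have d01 : Disjoint (OPT 0 ∩ S) (OPT 1 ∩ S) :=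
      (hdisj 0 1 (by decide)).mono Finset.inter_subset_left Finset.inter_subset_left
    have d02 : Disjoint (OPT 0 ∩ S) (OPT 2 ∩ S) :=
      (hdisj 0 2 (by decide)).mono Finset.inter_subset_left Finset.inter_subset_left
    have d12 : Disjoint (OPT 1 ∩ S) (OPT 2 ∩ S) :=
      (hdisj 1 2 (by decide)).mono Finset.inter_subset_left Finset.inter_subset_left
    have hu : ((OPT 0 ∩ S) ∪ (OPT 1 ∩ S) ∪ (OPT 2 ∩ S)).card = n 0 + n 1 + n 2 := by
      rw [Finset.card_union_of_disjoint (by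
        exact Finset.disjoint_union_left.2 ⟨d02, d12⟩),
        Finset.card_union_of_disjoint d01]
    have hsubS : (OPT 0 ∩ S) ∪ (OPT 1 ∩ S) ∪ (OPT 2 ∩ S) ⊆ S := by
      refine Finset.union_subset (Finset.union_subset ?_ ?_) ?_ <;>
        exact Finset.inter_subset_right
    have := Finset.card_le_card hsubS
    omega
  refine ⟨Y, hYalloc, ?_⟩
  have hcases : (n 1 = 0 ∧ n 2 = 0) ∨ (n 0 = 0 ∧ n 2 = 0) ∨ (n 0 = 0 ∧ n 1 = 0) ∨
      (n 0 ≤ 2 ∧ n 1 ≤ 1 ∧ n 2 = 0) ∨ (n 0 ≤ 2 ∧ n 2 ≤ 1 ∧ n 1 = 0) ∨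
      (n 1 ≤ 2 ∧ n 0 ≤ 1 ∧ n 2 = 0) ∨ (n 1 ≤ 2 ∧ n 2 ≤ 1 ∧ n 0 = 0) ∨
      (n 2 ≤ 2 ∧ n 0 ≤ 1 ∧ n 1 = 0) ∨ (n 2 ≤ 2 ∧ n 1 ≤ 1 ∧ n 0 = 0) ∨
      (n 0 ≤ 1 ∧ n 1 ≤ 1 ∧ n 2 ≤ 1) := by omega
  rcases hcases with ⟨h1, h2⟩ | ⟨h1, h2⟩ | ⟨h1, h2⟩ | ⟨h1, h2, h3⟩ | ⟨h1, h2, h3⟩ |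
    ⟨h1, h2, h3⟩ | ⟨h1, h2, h3⟩ | ⟨h1, h2, h3⟩ | ⟨h1, h2, h3⟩ | ⟨h1, h2, h3⟩
  · exact ⟨1, Or.inl ⟨by simpa using step 0 3 (by omega), step0 1 h1, step0 2 h2⟩⟩
  · refine ⟨Equiv.swap 0 1, Or.inl ?_⟩
    have e0 : (Equiv.swap (0:Fin 3) 1) 0 = 1 := by decide
    have e1 : (Equiv.swap (0:Fin 3) 1) 1 = 0 := by decide
    have e2 : (Equiv.swap (0:Fin 3) 1) 2 = 2 := by decide
    rw [e0, e1, e2]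
    exact ⟨by simpa using step 1 3 (by omega), step0 0 h1, step0 2 h2⟩
  · refine ⟨Equiv.swap 0 2, Or.inl ?_⟩
    have e0 : (Equiv.swap (0:Fin 3) 2) 0 = 2 := by decide
    have e1 : (Equiv.swap (0:Fin 3) 2) 1 = 1 := by decide
    have e2 : (Equiv.swap (0:Fin 3) 2) 2 = 0 := by decide
    rw [e0, e1, e2]
    exact ⟨by simpa using step 2 3 (by omega), step0 1 h2, step0 0 h1⟩
  · refine ⟨1, Or.inr (Or.inl ?_)⟩
    exact ⟨by simpa using step 0 2 h1, by simpa using step 1 1 h2, step0 2 h3⟩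
  · refine ⟨Equiv.swap 1 2, Or.inr (Or.inl ?_)⟩
    have e0 : (Equiv.swap (1:Fin 3) 2) 0 = 0 := by decide
    have e1 : (Equiv.swap (1:Fin 3) 2) 1 = 2 := by decide
    have e2 : (Equiv.swap (1:Fin 3) 2) 2 = 1 := by decide
    rw [e0, e1, e2]
    exact ⟨by simpa using step 0 2 h1, by simpa using step 2 1 h2, step0 1 h3⟩
  · refine ⟨Equiv.swap 0 1, Or.inr (Or.inl ?_)⟩
    have e0 : (Equiv.swap (0:Fin 3) 1) 0 = 1 := by decide
    have e1 : (Equiv.swap (0:Fin 3) 1) 1 = 0 := by decide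
    have e2 : (Equiv.swap (0:Fin 3) 1) 2 = 2 := by decide
    rw [e0, e1, e2]
    exact ⟨by simpa using step 1 2 h1, by simpa using step 0 1 h2, step0 2 h3⟩
  · refine ⟨(Equiv.swap 0 1 * Equiv.swap 1 2 : Equiv.Perm (Fin 3)), Or.inr (Or.inl ?_)⟩
    have e0 : ((Equiv.swap 0 1 * Equiv.swap 1 2 : Equiv.Perm (Fin 3))) 0 = 1 := by decide
    have e1 : ((Equiv.swap 0 1 * Equiv.swap 1 2 : Equiv.Perm (Fin 3))) 1 = 2 := by decide
    have e2 : ((Equiv.swap 0 1 * Equiv.swap 1 2 : Equiv.Perm (Fin 3))) 2 = 0 := by decide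
    rw [e0, e1, e2]
    exact ⟨by simpa using step 1 2 h1, by simpa using step 2 1 h2, step0 0 h3⟩
  · refine ⟨(Equiv.swap 1 2 * Equiv.swap 0 1 : Equiv.Perm (Fin 3)), Or.inr (Or.inl ?_)⟩
    have e0 : ((Equiv.swap 1 2 * Equiv.swap 0 1 : Equiv.Perm (Fin 3))) 0 = 2 := by decide
    have e1 : ((Equiv.swap 1 2 * Equiv.swap 0 1 : Equiv.Perm (Fin 3))) 1 = 0 := by decide
    have e2 : ((Equiv.swap 1 2 * Equiv.swap 0 1 : Equiv.Perm (Fin 3))) 2 = 1 := by decide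
    rw [e0, e1, e2]
    exact ⟨by simpa using step 2 2 h1, by simpa using step 0 1 h2, step0 1 h3⟩
  · refine ⟨Equiv.swap 0 2, Or.inr (Or.inl ?_)⟩
    have e0 : (Equiv.swap (0:Fin 3) 2) 0 = 2 := by decide
    have e1 : (Equiv.swap (0:Fin 3) 2) 1 = 1 := by decide
    have e2 : (Equiv.swap (0:Fin 3) 2) 2 = 0 := by decide
    rw [e0, e1, e2]
    exact ⟨by simpa using step 2 2 h1, by simpa using step 1 1 h2, step0 0 h3⟩
  · refine ⟨1, Or.inr (Or.inr ?_)⟩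
    intro a
    have ha : n a ≤ 1 := by fin_cases a <;> assumption
    simpa using step a 1 ha
end

section
/- Let X be a finite set of goods with additive nonnegative values v and additive nonnegative costs c, let B > 0 be a budget with c(X) ≤ B, let n ≥ 1 be an integer, and let s ≥ 0 satisfy v(g) ≤ s for every g ∈ X. Then there exists a subset Y ⊆ X with c(Y) ≤ B/n and v(Y) ≥ v(X)/n − s. -/
/-!
STATEMENT 8: Let X be a finite set of goods with additive nonnegative values v and
additive nonnegative costs c, let B > 0 be a budget with c(X) ≤ B, let n ≥ 1 be an
integer, and let s ≥ 0 with v(g) ≤ s for every g ∈ X.  Then there is a subset Y ⊆ X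
with c(Y) ≤ B/n and v(Y) ≥ v(X)/n − s.
-/

open Finset

private lemma cross_single {G : Type*} (v c : G → ℝ) (a : G) :
    ∀ u : List G, (∀ b ∈ u, v b * c a ≤ v a * c b) →
      (u.map v).sum * c a ≤ v a * (u.map c).sum := by
  intro u
  induction u with
  | nil => simp
  | cons b u ih =>
    intro h
    have h1 := h b (by simp)
    have h2 := ih (fun x hx => h x (by simp [hx]))
    simp only [List.map_cons, List.sum_cons]
    nlinarith

private lemma cross_list {G : Type*} (v c : G → ℝ) :
    ∀ t u : List G, (∀ x ∈ t, ∀ y ∈ u, v y * c x ≤ v x * c y) →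
      (u.map v).sum * (t.map c).sum ≤ (t.map v).sum * (u.map c).sum := by
  intro t
  induction t with
  | nil => simp
  | cons a t ih =>
    intro u h
    have h1 := cross_single v c a u (h a (by simp))
    have h2 := ih u (fun x hx y hy => h x (by simp [hx]) y hy)
    simp only [List.map_cons, List.sum_cons]
    nlinarith

private lemma prefix_ineq {G : Type*} (v c : G → ℝ) (l : List G) (k : ℕ)
    (hp : l.Pairwise (fun a b => v b * c a ≤ v a * c b)) :
    (l.map v).sum * ((l.take k).map c).sum ≤ ((l.take k).map v).sum * (l.map c).sum := by
  have hcross : ∀ x ∈ l.take k, ∀ y ∈ l.drop k, v y * c x ≤ v x * c y :=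
    fun x hx y hy => hp.rel_of_mem_take_of_mem_drop hx hy
  have key := cross_list v c (l.take k) (l.drop k) hcross
  have hl : l = l.take k ++ l.drop k := (List.take_append_drop k l).symm
  have hv : (l.map v).sum = ((l.take k).map v).sum + ((l.drop k).map v).sum := by
    conv_lhs => rw [hl]
    simp
  have hc : (l.map c).sum = ((l.take k).map c).sum + ((l.drop k).map c).sum := by
    conv_lhs => rw [hl]
    simp
  rw [hv, hc]
  nlinarith

theorem density_removal {G : Type*} [DecidableEq G] (X : Finset G) (v c : G → ℝ)
    (hv : ∀ g ∈ X, 0 ≤ v g) (hc : ∀ g ∈ X, 0 ≤ c g)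
    (B : ℝ) (hB : 0 < B) (hcX : ∑ g ∈ X, c g ≤ B)
    (n : ℕ) (hn : 1 ≤ n) (s : ℝ) (hs : 0 ≤ s) (hvs : ∀ g ∈ X, v g ≤ s) :
    ∃ Y ⊆ X, (∑ g ∈ Y, c g) ≤ B / n ∧
      (∑ g ∈ X, v g) / n - s ≤ ∑ g ∈ Y, v g := by
  classical
  have hn' : (1 : ℝ) ≤ (n : ℝ) := by exact_mod_cast hn
  have hnpos : (0 : ℝ) < (n : ℝ) := lt_of_lt_of_le one_pos hn'
  have hBn : 0 < B / n := div_pos hB hnpos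
  have hvX : 0 ≤ ∑ g ∈ X, v g := Finset.sum_nonneg hv
  -- Easy case: the whole set fits.
  by_cases hfit : ∑ g ∈ X, c g ≤ B / n
  · refine ⟨X, le_refl _, hfit, ?_⟩
    have : (∑ g ∈ X, v g) / n ≤ ∑ g ∈ X, v g := div_le_self hvX hn'
    linarith
  -- Hard case.
  set Xp := X.filter (fun g => 0 < c g) with hXpdef
  set X0 := X.filter (fun g => ¬ 0 < c g) with hX0def
  have hXpX : Xp ⊆ X := Finset.filter_subset _ _
  have hX0X : X0 ⊆ X := Finset.filter_subset _ _
  have hc0 : ∀ g ∈ X0, c g = 0 := by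
    intro g hg
    have h1 := (Finset.mem_filter.mp hg).2
    have h2 := hc g (hX0X hg)
    exact le_antisymm (not_lt.mp h1) h2
  have hsplitc : ∑ g ∈ X0, c g + ∑ g ∈ Xp, c g = ∑ g ∈ X, c g := by
    rw [hX0def, hXpdef]
    exact Finset.sum_filter_not_add_sum_filter X _ c
  have hsplitv : ∑ g ∈ X0, v g + ∑ g ∈ Xp, v g = ∑ g ∈ X, v g := by
    rw [hX0def, hXpdef]
    exact Finset.sum_filter_not_add_sum_filter X _ v
  have hc00 : ∑ g ∈ X0, c g = 0 := Finset.sum_eq_zero hc0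
  -- sorted list of Xp by decreasing density
  set dens : G → ℝ := fun g => v g / c g with hdens
  set lef : G → G → Bool := fun g h => decide (dens h ≤ dens g) with hle
  set l : List G := Xp.toList.mergeSort lef with hldef
  have hperm : List.Perm l Xp.toList := List.mergeSort_perm _ _
  have hnodup : l.Nodup := hperm.nodup_iff.mpr (Finset.nodup_toList Xp)
  have hmem : ∀ g, g ∈ l ↔ g ∈ Xp := by
    intro g
    rw [hperm.mem_iff, Finset.mem_toList]
  have hlfin : l.toFinset = Xp := by
    ext g
    rw [List.mem_toFinset, hmem]
  have hsort : l.Pairwise (fun a b => lef a b = true) := by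
    apply List.pairwise_mergeSort
    · intro a b c hab hbc
      simp only [hle, decide_eq_true_eq] at *
      exact le_trans hbc hab
    · intro a b
      simp only [hle, Bool.or_eq_true, decide_eq_true_eq]
      exact le_total (dens b) (dens a)
  have hpair : l.Pairwise (fun a b => v b * c a ≤ v a * c b) := by
    refine hsort.imp_of_mem ?_
    intro a b ha hb hab
    have hca : 0 < c a := (Finset.mem_filter.mp ((hmem a).mp ha)).2
    have hcb : 0 < c b := (Finset.mem_filter.mp ((hmem b).mp hb)).2
    simp only [hle, decide_eq_true_eq, hdens] at hab
    exact (div_le_div_iff₀ hcb hca).mp hab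
  -- list sums equal finset sums
  have hsumv : (l.map v).sum = ∑ g ∈ Xp, v g := by
    rw [← hlfin, List.sum_toFinset _ hnodup]
  have hsumc : (l.map c).sum = ∑ g ∈ Xp, c g := by
    rw [← hlfin, List.sum_toFinset _ hnodup]
  set C : ℕ → ℝ := fun k => ((l.take k).map c).sum with hC
  -- the predicate and its minimal witness
  have hwit : B / n < C l.length := by
    have : C l.length = ∑ g ∈ Xp, c g := by
      simp only [hC, List.take_length]
      exact hsumc
    rw [this]
    have : ∑ g ∈ Xp, c g = ∑ g ∈ X, c g := by linarith
    rw [this]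
    exact lt_of_not_ge hfit
  have hex : ∃ k, B / n < C k := ⟨l.length, hwit⟩
  set k0 := Nat.find hex with hk0def
  have hk0spec : B / n < C k0 := Nat.find_spec hex
  have hk0le : k0 ≤ l.length := Nat.find_le hwit
  have hk0pos : 1 ≤ k0 := by
    by_contra h
    push_neg at h
    interval_cases k0
    · simp only [hC, List.take_zero, List.map_nil, List.sum_nil] at hk0spec
      linarith
  set k := k0 - 1 with hkdef
  have hkk0 : k + 1 = k0 := Nat.succ_pred_eq_of_pos hk0pos
  have hklt : k < l.length := by omega
  have hCk : C k ≤ B / n := by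
    have := Nat.find_min hex (m := k) (by omega)
    push_neg at this
    exact this
  have hCk1 : B / n < C (k + 1) := by rw [hkk0]; exact hk0spec
  -- the chosen element and prefix decomposition
  have htake : l.take (k + 1) = l.take k ++ [l[k]] := by
    rw [List.take_succ, List.getElem?_eq_getElem hklt]
    rfl
  have hgX : l[k] ∈ X := hXpX ((hmem _).mp (List.getElem_mem hklt))
  -- key density inequality for the (k+1)-prefix
  have hkey := prefix_ineq v c l (k + 1) hpair
  have hVL : (l.map v).sum = ∑ g ∈ Xp, v g := hsumv
  have hCL : (l.map c).sum = ∑ g ∈ Xp, c g := hsumc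
  have hCLB : (l.map c).sum ≤ B := by
    rw [hCL]; linarith
  have hCT_le_CL : C (k + 1) ≤ (l.map c).sum := by
    have hl : l = l.take (k+1) ++ l.drop (k+1) := (List.take_append_drop _ l).symm
    have hdnn : 0 ≤ ((l.drop (k+1)).map c).sum := by
      apply List.sum_nonneg
      intro x hx
      obtain ⟨g, hg, rfl⟩ := List.mem_map.mp hx
      exact hc g (hXpX ((hmem g).mp (List.mem_of_mem_drop hg)))
    have : (l.map c).sum = C (k+1) + ((l.drop (k+1)).map c).sum := by
      conv_lhs => rw [hl]
      simp [hC]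
    linarith
  have hCLpos : 0 < (l.map c).sum := lt_of_lt_of_le (lt_trans hBn hCk1) hCT_le_CL
  have hVLnn : 0 ≤ (l.map v).sum := by
    apply List.sum_nonneg
    intro x hx
    obtain ⟨g, hg, rfl⟩ := List.mem_map.mp hx
    exact hv g (hXpX ((hmem g).mp hg))
  -- v(take (k+1)) ≥ VL / n
  have hVT : (l.map v).sum / n ≤ ((l.take (k+1)).map v).sum := by
    rw [div_le_iff₀ hnpos]
    set VL := (l.map v).sum
    set VT := ((l.take (k+1)).map v).sum
    set CL := (l.map c).sum
    have e1 : VL * B ≤ VL * (C (k+1) * n) := by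
      have hB' : B = B / n * n := (div_mul_cancel₀ B hnpos.ne').symm
      calc VL * B = VL * (B / n * n) := by rw [← hB']
        _ ≤ VL * (C (k+1) * n) := by
            apply mul_le_mul_of_nonneg_left _ hVLnn
            exact mul_le_mul_of_nonneg_right (le_of_lt hCk1) (le_of_lt hnpos)
    have e2 : VL * CL ≤ VL * B := mul_le_mul_of_nonneg_left hCLB hVLnn
    have e4 : VL * C (k+1) * n ≤ VT * CL * n :=
      mul_le_mul_of_nonneg_right hkey (le_of_lt hnpos)
    have e5 : VL * CL ≤ VT * n * CL := by nlinarith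
    exact le_of_mul_le_mul_right e5 hCLpos
  -- value of the k-prefix
  have hvsplit : ((l.take (k+1)).map v).sum = ((l.take k).map v).sum + v l[k] := by
    rw [htake, List.map_append, List.sum_append]; simp
  have hgs : v l[k] ≤ s := hvs _ hgX
  have hVk : (l.map v).sum / n - s ≤ ((l.take k).map v).sum := by
    have := hVT
    rw [hvsplit] at this
    linarith
  -- define Y
  refine ⟨X0 ∪ (l.take k).toFinset, ?_, ?_, ?_⟩
  · intro g hg
    rcases Finset.mem_union.mp hg with h | h
    · exact hX0X h
    · exact hXpX ((hmem g).mp (List.mem_of_mem_take (List.mem_toFinset.mp h)))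
  all_goals {
    have hdisj : Disjoint X0 (l.take k).toFinset := by
      rw [Finset.disjoint_left]
      intro g hg hg'
      have h1 := (Finset.mem_filter.mp hg).2
      have h2 : g ∈ Xp := (hmem g).mp (List.mem_of_mem_take (List.mem_toFinset.mp hg'))
      exact h1 (Finset.mem_filter.mp h2).2
    have hnodupk : (l.take k).Nodup := hnodup.sublist (List.take_sublist k l)
    first
    | · -- cost bound
        rw [Finset.sum_union hdisj, List.sum_toFinset _ hnodupk]
        simp only [hc00, zero_add]
        simpa [hC] using hCk
    | · -- value bound
        rw [Finset.sum_union hdisj, List.sum_toFinset _ hnodupk]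
        have hv0nn : 0 ≤ ∑ g ∈ X0, v g := Finset.sum_nonneg (fun g hg => hv g (hX0X hg))
        have hv0 : (∑ g ∈ X0, v g) / n ≤ ∑ g ∈ X0, v g := div_le_self hv0nn hn'
        have : (∑ g ∈ X, v g) / n = (∑ g ∈ X0, v g) / n + (∑ g ∈ Xp, v g) / n := by
          rw [← hsplitv]; ring
        rw [this]
        rw [hVL] at hVk
        linarith
  }
end

section
/- Consider a budgeted fair-division instance with three agents that all have the same budget B_1 = B_2 = B_3 = B, let OPT = (OPT_1, OPT_2, OPT_3) be a budget-feasible allocation maximizing the Nash social welfare, and let t_1, t_2, t_3 ≥ 0 be such that v_i(g) ≤ t_i for every agent i and every good g ∈ M. Then there exist a budget-feasible allocation Y = (Y_1, Y_2, Y_3) that is EFx with respect to budgets and a labeling (i, j, k) of the three agents such that v_i(Y_i) ≥ v_i(OPT_i)/9 − t_i/3, v_j(Y_j) ≥ v_j(OPT_j)/9 − 2·t_j/3, and v_k(Y_k) ≥ v_k(OPT_k)/9 − t_k. -/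
/-!
STATEMENT 9: For a three-agent instance with a common budget B and a maximum-Nash-welfare
budget-feasible allocation OPT, if t_i bounds agent i's value for every single good,
then there is a budget-feasible EFx allocation Y and a labeling (i,j,k) of the agents with
v_i(Y_i) ≥ v_i(OPT_i)/9 − t_i/3, v_j(Y_j) ≥ v_j(OPT_j)/9 − 2t_j/3, and
v_k(Y_k) ≥ v_k(OPT_k)/9 − t_k.
-/

open Finset

variable {G : Type*}

theorem efx_three_agents_equal_budgets [DecidableEq G] (M : Finset G) (c : G → ℝ)
    (B : ℝ) (v : Fin 3 → G → ℝ)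
    (hc : ∀ g ∈ M, 0 ≤ c g) (hB : 0 ≤ B) (hv : ∀ i, ∀ g ∈ M, 0 ≤ v i g)
    (OPT : Fin 3 → Finset G) (hOPT : IsAlloc M c (fun _ => B) OPT)
    (hOPTmax : ∀ X : Fin 3 → Finset G, IsAlloc M c (fun _ => B) X →
      NSW v X ≤ NSW v OPT)
    (t : Fin 3 → ℝ) (ht : ∀ i, 0 ≤ t i) (hvt : ∀ i, ∀ g ∈ M, v i g ≤ t i) :
    ∃ Y : Fin 3 → Finset G,
      IsAlloc M c (fun _ => B) Y ∧
      IsEFx c (fun _ => B) v Y ∧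
      ∃ σ : Equiv.Perm (Fin 3),
        tot (v (σ 0)) (OPT (σ 0)) / 9 - t (σ 0) / 3 ≤ tot (v (σ 0)) (Y (σ 0)) ∧
        tot (v (σ 1)) (OPT (σ 1)) / 9 - 2 * t (σ 1) / 3 ≤ tot (v (σ 1)) (Y (σ 1)) ∧
        tot (v (σ 2)) (OPT (σ 2)) / 9 - t (σ 2) ≤ tot (v (σ 2)) (Y (σ 2)) := by
  classical
  obtain ⟨hOPTsub, hOPTdisj, hOPTcost⟩ := hOPT
  have hfin3 : ∀ j : Fin 3, j = 0 ∨ j = 1 ∨ j = 2 := by decide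
  -- nonnegativity / monotonicity helpers
  have hnn : ∀ (i : Fin 3) (S : Finset G), S ⊆ M → 0 ≤ tot (v i) S :=
    fun i S hS => Finset.sum_nonneg fun g hg => hv i g (hS hg)
  have hmono : ∀ (i : Fin 3) (S T : Finset G), S ⊆ T → T ⊆ M →
      tot (v i) S ≤ tot (v i) T :=
    fun i S T hST hTM =>
      Finset.sum_le_sum_of_subset_of_nonneg hST fun g hg _ => hv i g (hTM hg)
  have hmonoc : ∀ (S T : Finset G), S ⊆ T → T ⊆ M → tot c S ≤ tot c T :=
    fun S T hST hTM =>
      Finset.sum_le_sum_of_subset_of_nonneg hST fun g hg _ => hc g (hTM hg)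
  -- the finite set of "good" partial allocations:
  -- every bundle lies inside a single OPT-bundle, bundles are pairwise disjoint,
  -- and the strong EFx property holds.
  set P : Finset (Fin 3 → Finset G) :=
    (Fintype.piFinset fun _ : Fin 3 => M.powerset).filter
      (fun X => (∀ j, ∃ a, X j ⊆ OPT a) ∧ (∀ i j, i ≠ j → Disjoint (X i) (X j)) ∧
        (∀ i j, ∀ g ∈ X j, tot (v i) ((X j).erase g) ≤ tot (v i) (X i))) with hPdef
  have hPne : P.Nonempty := by
    refine ⟨fun _ => ∅, ?_⟩
    rw [hPdef, Finset.mem_filter]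
    refine ⟨?_, fun j => ⟨0, Finset.empty_subset _⟩, fun i j _ => by simp,
      fun i j g hg => by simp at hg⟩
    rw [Fintype.mem_piFinset]
    exact fun a => Finset.mem_powerset.mpr (Finset.empty_subset M)
  -- pick a good allocation maximizing the total value
  obtain ⟨X, hXP, hXmax⟩ := Finset.exists_max_image P (fun X => ∑ i, tot (v i) (X i)) hPne
  have hXP' := hXP
  rw [hPdef, Finset.mem_filter] at hXP'
  obtain ⟨hXpi, hXpool, hXdisj, hXefx⟩ := hXP'
  have hXM : ∀ j, X j ⊆ M := fun j =>
    Finset.mem_powerset.mp (Fintype.mem_piFinset.mp hXpi j)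
  set K : Finset G := X 0 ∪ X 1 ∪ X 2 with hKdef
  have hKM : K ⊆ M :=
    Finset.union_subset (Finset.union_subset (hXM 0) (hXM 1)) (hXM 2)
  have hXK : ∀ j, X j ⊆ K := by
    intro j
    rcases hfin3 j with h | h | h <;> subst h
    · exact Finset.subset_union_left.trans Finset.subset_union_left
    · exact Finset.subset_union_right.trans Finset.subset_union_left
    · exact Finset.subset_union_right
  -- Terminal property: at the maximum, nobody envies the unallocated part of any pool.
  have hterm : ∀ (i a : Fin 3), tot (v i) (OPT a \ K) ≤ tot (v i) (X i) := by
    by_contra hcon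
    push_neg at hcon
    obtain ⟨i₀, a₀, hia⟩ := hcon
    -- all "envied subsets of an unallocated pool" triples
    set T : Finset (Fin 3 × Fin 3 × Finset G) :=
      (Finset.univ ×ˢ Finset.univ ×ˢ M.powerset).filter
        (fun q => q.2.2 ⊆ OPT q.2.1 \ K ∧ tot (v q.1) (X q.1) < tot (v q.1) q.2.2)
      with hTdef
    have hTne : T.Nonempty := by
      refine ⟨⟨i₀, a₀, OPT a₀ \ K⟩, ?_⟩
      rw [hTdef, Finset.mem_filter]
      refine ⟨?_, subset_rfl, hia⟩
      rw [Finset.mem_product]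
      refine ⟨Finset.mem_univ _, ?_⟩
      rw [Finset.mem_product]
      exact ⟨Finset.mem_univ _,
        Finset.mem_powerset.mpr (Finset.sdiff_subset.trans (hOPTsub a₀))⟩
    -- pick an envied subset of minimum cardinality
    obtain ⟨q, hqT, hqmin⟩ := Finset.exists_min_image T (fun q => q.2.2.card) hTne
    obtain ⟨μ, b, S⟩ := q
    rw [hTdef, Finset.mem_filter] at hqT
    obtain ⟨hqmem, hSsub, hSgt⟩ := hqT
    have hSM : S ⊆ M := by
      rw [Finset.mem_product] at hqmem
      have h2 := hqmem.2
      rw [Finset.mem_product] at h2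
      exact Finset.mem_powerset.mp h2.2
    -- reassign S to agent μ
    set X' : Fin 3 → Finset G := Function.update X μ S with hX'def
    have hX'μ : X' μ = S := by simp [hX'def]
    have hX'other : ∀ j, j ≠ μ → X' j = X j := by
      intro j h
      simp [hX'def, h]
    have hX'M : ∀ j, X' j ⊆ M := by
      intro j
      rcases eq_or_ne j μ with h | h
      · rw [h, hX'μ]; exact hSM
      · rw [hX'other j h]; exact hXM j
    have hSK : Disjoint S K := by
      rw [Finset.disjoint_left]
      intro g hgS hgK
      have hmem := hSsub hgS
      rw [Finset.mem_sdiff] at hmem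
      exact hmem.2 hgK
    have hX'P : X' ∈ P := by
      rw [hPdef, Finset.mem_filter]
      refine ⟨?_, ?_, ?_, ?_⟩
      · rw [Fintype.mem_piFinset]
        exact fun a => Finset.mem_powerset.mpr (hX'M a)
      · intro j
        rcases eq_or_ne j μ with h | h
        · rw [h, hX'μ]
          exact ⟨b, hSsub.trans Finset.sdiff_subset⟩
        · rw [hX'other j h]; exact hXpool j
      · intro i j hij
        rcases eq_or_ne i μ with hi | hi
        · have hj : j ≠ μ := by rw [← hi]; exact hij.symm
          rw [hi, hX'μ, hX'other j hj]
          exact hSK.mono_right (hXK j)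
        · rcases eq_or_ne j μ with hj | hj
          · rw [hj, hX'μ, hX'other i hi]
            exact (hSK.mono_right (hXK i)).symm
          · rw [hX'other i hi, hX'other j hj]
            exact hXdisj i j hij
      · intro i j g hg
        rcases eq_or_ne j μ with hj | hj
        · rw [hj, hX'μ] at hg ⊢
          rcases eq_or_ne i μ with hi | hi
          · rw [hi, hX'μ]
            exact hmono _ _ _ (Finset.erase_subset _ _) hSM
          · rw [hX'other i hi]
            by_contra hgt
            push_neg at hgt
            have hmem' : (⟨i, b, S.erase g⟩ : Fin 3 × Fin 3 × Finset G) ∈ T := by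
              rw [hTdef, Finset.mem_filter]
              refine ⟨?_, (Finset.erase_subset _ _).trans hSsub, hgt⟩
              rw [Finset.mem_product]
              refine ⟨Finset.mem_univ _, ?_⟩
              rw [Finset.mem_product]
              exact ⟨Finset.mem_univ _,
                Finset.mem_powerset.mpr ((Finset.erase_subset _ _).trans hSM)⟩
            have hcard := hqmin _ hmem'
            simp only at hcard
            rw [Finset.card_erase_of_mem hg] at hcard
            have hpos : 0 < S.card := Finset.card_pos.mpr ⟨g, hg⟩
            omega
        · rw [hX'other j hj] at hg ⊢
          rcases eq_or_ne i μ with hi | hi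
          · rw [hi, hX'μ]
            exact (hXefx μ j g hg).trans hSgt.le
          · rw [hX'other i hi]
            exact hXefx i j g hg
    -- the total value strictly increased: contradiction with maximality
    have e1 := Finset.add_sum_erase Finset.univ (fun i => tot (v i) (X' i)) (Finset.mem_univ μ)
    have e2 := Finset.add_sum_erase Finset.univ (fun i => tot (v i) (X i)) (Finset.mem_univ μ)
    have e3 : (∑ i ∈ Finset.univ.erase μ, tot (v i) (X' i))
        = ∑ i ∈ Finset.univ.erase μ, tot (v i) (X i) :=
      Finset.sum_congr rfl fun j hj => by rw [hX'other j (Finset.ne_of_mem_erase hj)]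
    have e4 : tot (v μ) (X' μ) = tot (v μ) S := by rw [hX'μ]
    have hle := hXmax X' hX'P
    linarith
  -- cross bound from EFx: each other bundle is worth at most own value plus t i
  have hcross : ∀ i j : Fin 3, tot (v i) (X j) ≤ tot (v i) (X i) + t i := by
    intro i j
    rcases Finset.eq_empty_or_nonempty (X j) with h | h
    · have he : tot (v i) (X j) = 0 := by rw [h]; simp [tot]
      have h1 := hnn i (X i) (hXM i)
      have h2 := ht i
      linarith
    · obtain ⟨g, hg⟩ := h
      have h1 : (∑ x ∈ (X j).erase g, v i x) + v i g = ∑ x ∈ X j, v i x :=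
        Finset.sum_erase_add _ _ hg
      have h2 := hXefx i j g hg
      have h3 := hvt i g (hXM j hg)
      simp only [tot] at h1 h2 ⊢
      linarith
  -- main accounting bound
  have hbound : ∀ i : Fin 3, tot (v i) (OPT i) ≤ 6 * tot (v i) (X i) + 3 * t i := by
    intro i
    have hsplit : ∀ a : Fin 3,
        tot (v i) (OPT a) = tot (v i) (OPT a ∩ K) + tot (v i) (OPT a \ K) := by
      intro a
      simp only [tot]
      rw [Finset.sum_inter_add_sum_sdiff]
    have hd01 : Disjoint (OPT 0 ∩ K) (OPT 1 ∩ K) :=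
      (hOPTdisj 0 1 (by decide)).mono Finset.inter_subset_left Finset.inter_subset_left
    have hd02 : Disjoint (OPT 0 ∩ K) (OPT 2 ∩ K) :=
      (hOPTdisj 0 2 (by decide)).mono Finset.inter_subset_left Finset.inter_subset_left
    have hd12 : Disjoint (OPT 1 ∩ K) (OPT 2 ∩ K) :=
      (hOPTdisj 1 2 (by decide)).mono Finset.inter_subset_left Finset.inter_subset_left
    have hd2 : Disjoint ((OPT 0 ∩ K) ∪ (OPT 1 ∩ K)) (OPT 2 ∩ K) :=
      Finset.disjoint_union_left.mpr ⟨hd02, hd12⟩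
    have hsubK : (OPT 0 ∩ K) ∪ (OPT 1 ∩ K) ∪ (OPT 2 ∩ K) ⊆ K := by
      refine Finset.union_subset (Finset.union_subset ?_ ?_) ?_ <;>
        exact Finset.inter_subset_right
    have hinter : tot (v i) (OPT 0 ∩ K) + tot (v i) (OPT 1 ∩ K) + tot (v i) (OPT 2 ∩ K)
        ≤ tot (v i) K := by
      have e : tot (v i) ((OPT 0 ∩ K) ∪ (OPT 1 ∩ K) ∪ (OPT 2 ∩ K))
          = tot (v i) (OPT 0 ∩ K) + tot (v i) (OPT 1 ∩ K) + tot (v i) (OPT 2 ∩ K) := by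
        simp only [tot]
        rw [Finset.sum_union hd2, Finset.sum_union hd01]
      rw [← e]
      exact hmono i _ _ hsubK hKM
    have hKeq : tot (v i) K = tot (v i) (X 0) + tot (v i) (X 1) + tot (v i) (X 2) := by
      have hdX2 : Disjoint (X 0 ∪ X 1) (X 2) :=
        Finset.disjoint_union_left.mpr ⟨hXdisj 0 2 (by decide), hXdisj 1 2 (by decide)⟩
      simp only [tot, hKdef]
      rw [Finset.sum_union hdX2, Finset.sum_union (hXdisj 0 1 (by decide))]
    have hVle : tot (v i) (OPT i)
        ≤ tot (v i) (OPT 0) + tot (v i) (OPT 1) + tot (v i) (OPT 2) := by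
      have h0 := hnn i (OPT 0) (hOPTsub 0)
      have h1 := hnn i (OPT 1) (hOPTsub 1)
      have h2 := hnn i (OPT 2) (hOPTsub 2)
      rcases hfin3 i with h | h | h <;> subst h <;> linarith
    have ht0 := hterm i 0
    have ht1 := hterm i 1
    have ht2 := hterm i 2
    have hc0 := hcross i 0
    have hc1 := hcross i 1
    have hc2 := hcross i 2
    have hs0 := hsplit 0
    have hs1 := hsplit 1
    have hs2 := hsplit 2
    linarith
  -- assemble the answer
  refine ⟨X, ⟨hXM, hXdisj, ?_⟩, ?_, Equiv.refl _, ?_, ?_, ?_⟩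
  · intro i
    obtain ⟨a, ha⟩ := hXpool i
    exact (hmonoc _ _ ha (hOPTsub a)).trans (hOPTcost a)
  · intro i j S hS hcS g hg
    have h1 : tot (v i) (S.erase g) ≤ tot (v i) ((X j).erase g) :=
      hmono i _ _ (Finset.erase_subset_erase _ hS)
        ((Finset.erase_subset _ _).trans (hXM j))
    exact h1.trans (hXefx i j g (hS hg))
  · simp only [Equiv.refl_apply]
    have h1 := hbound 0
    have h2 := hnn 0 (X 0) (hXM 0)
    have h3 := ht 0
    linarith
  · simp only [Equiv.refl_apply]
    have h1 := hbound 1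
    have h2 := hnn 1 (X 1) (hXM 1)
    have h3 := ht 1
    linarith
  · simp only [Equiv.refl_apply]
    have h1 := hbound 2
    have h2 := hnn 2 (X 2) (hXM 2)
    have h3 := ht 2
    linarith
end

section
/- For every budgeted fair-division instance with three agents, there exists a budget-feasible allocation Y that is EFx with respect to budgets and satisfies NSW(Y) ≥ (1/171)·NSW(OPT), where OPT is a budget-feasible allocation maximizing the Nash social welfare; that is, EFx can always be guaranteed together with a constant-factor approximation of the optimal Nash social welfare. -/
/-!
STATEMENT 13: For every budgeted fair-division instance with three agents there is a
budget-feasible allocation Y that is EFx with respect to budgets and satisfies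
NSW(Y) ≥ (1/171)·NSW(OPT), where OPT is a budget-feasible allocation maximizing the
Nash social welfare.
-/

open Finset

variable {G : Type*}

namespace EfxProof

lemma tot_nonneg {f : G → ℝ} {S : Finset G} (h : ∀ g ∈ S, 0 ≤ f g) : 0 ≤ tot f S :=
  Finset.sum_nonneg h

lemma tot_mono {f : G → ℝ} {S T : Finset G} (hST : S ⊆ T) (h : ∀ g ∈ T, 0 ≤ f g) :
    tot f S ≤ tot f T :=
  Finset.sum_le_sum_of_subset_of_nonneg hST (fun g hg _ => h g hg)

variable [DecidableEq G]

/-- A budget-feasible EFx allocation whose bundles live inside the pool `W`. -/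
def Good (c : G → ℝ) (B : Fin 3 → ℝ) (v : Fin 3 → G → ℝ) (W : Finset G)
    (Z : Fin 3 → Finset G) : Prop :=
  (∀ i, Z i ⊆ W) ∧ (∀ i j, i ≠ j → Disjoint (Z i) (Z j)) ∧
    (∀ i, tot c (Z i) ≤ B i) ∧ IsEFx c B v Z

lemma good_empty (c : G → ℝ) (B : Fin 3 → ℝ) (v : Fin 3 → G → ℝ) (W : Finset G)
    (hB : ∀ i, 0 ≤ B i) : Good c B v W (fun _ => (∅ : Finset G)) := by
  refine ⟨fun i => empty_subset _, fun i j _ => by simp, fun i => by simpa [tot] using hB i, ?_⟩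
  intro i j S hS _ g hg
  rw [Finset.subset_empty] at hS
  subst hS
  exact absurd hg (Finset.notMem_empty g)

/-- There is a `Good` allocation in `W` maximizing the total (utilitarian) value. -/
lemma exists_max (c : G → ℝ) (B : Fin 3 → ℝ) (v : Fin 3 → G → ℝ) (W : Finset G)
    (hB : ∀ i, 0 ≤ B i) :
    ∃ Y, Good c B v W Y ∧ ∀ Z, Good c B v W Z →
      (∑ i, tot (v i) (Z i)) ≤ ∑ i, tot (v i) (Y i) := by
  classical
  set F : Finset (Finset G × Finset G × Finset G) :=
    (W.powerset ×ˢ W.powerset ×ˢ W.powerset).filter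
      (fun t => Good c B v W ![t.1, t.2.1, t.2.2]) with hF
  have hemp : (![∅, ∅, ∅] : Fin 3 → Finset G) = fun _ => (∅ : Finset G) := by
    funext i; fin_cases i <;> rfl
  have hne : F.Nonempty := by
    refine ⟨((∅ : Finset G), (∅ : Finset G), (∅ : Finset G)), ?_⟩
    rw [hF, mem_filter]
    constructor
    · rw [Finset.mem_product]
      refine ⟨mem_powerset.mpr (empty_subset _), ?_⟩
      rw [Finset.mem_product]
      exact ⟨mem_powerset.mpr (empty_subset _), mem_powerset.mpr (empty_subset _)⟩
    · show Good c B v W ![∅, ∅, ∅]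
      rw [hemp]
      exact good_empty c B v W hB
  obtain ⟨t₀, ht₀, hmax⟩ :=
    F.exists_max_image (fun t => ∑ i, tot (v i) ((![t.1, t.2.1, t.2.2] : Fin 3 → Finset G) i)) hne
  refine ⟨![t₀.1, t₀.2.1, t₀.2.2], (mem_filter.mp ht₀).2, ?_⟩
  intro Z hZ
  have hZt : (![Z 0, Z 1, Z 2] : Fin 3 → Finset G) = Z := by
    funext i; fin_cases i <;> rfl
  have hmem : (Z 0, Z 1, Z 2) ∈ F := by
    rw [hF, mem_filter]
    constructor
    · rw [Finset.mem_product]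
      refine ⟨mem_powerset.mpr (hZ.1 0), ?_⟩
      rw [Finset.mem_product]
      exact ⟨mem_powerset.mpr (hZ.1 1), mem_powerset.mpr (hZ.1 2)⟩
    · show Good c B v W ![Z 0, Z 1, Z 2]
      rw [hZt]; exact hZ
  have := hmax _ hmem
  simpa [hZt] using this

/-- A total-value-maximal `Good` allocation leaves no affordable envy towards the
unallocated pool. -/
lemma pool_free (M : Finset G) (c : G → ℝ) (B : Fin 3 → ℝ) (v : Fin 3 → G → ℝ)
    (hc : ∀ g ∈ M, 0 ≤ c g) (W : Finset G) (hW : W ⊆ M)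
    (Y : Fin 3 → Finset G) (hY : Good c B v W Y)
    (hmax : ∀ Z, Good c B v W Z →
      (∑ i, tot (v i) (Z i)) ≤ ∑ i, tot (v i) (Y i)) :
    ∀ i (S : Finset G), S ⊆ W → (∀ j, Disjoint S (Y j)) → tot c S ≤ B i →
      tot (v i) S ≤ tot (v i) (Y i) := by
  classical
  intro i S hSW hSdisj haff
  by_contra hlt
  push_neg at hlt
  set 𝒮 : Finset (Finset G) := W.powerset.filter
    (fun T => (∀ j, Disjoint T (Y j)) ∧
      ∃ k, tot c T ≤ B k ∧ tot (v k) (Y k) < tot (v k) T) with h𝒮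
  have hSmem : S ∈ 𝒮 := by
    rw [h𝒮, mem_filter]
    exact ⟨mem_powerset.mpr hSW, hSdisj, i, haff, hlt⟩
  obtain ⟨S₀, hS₀mem, hmin⟩ := 𝒮.exists_min_image (fun T => T.card) ⟨S, hSmem⟩
  rw [h𝒮, mem_filter] at hS₀mem
  have hS₀W : S₀ ⊆ W := mem_powerset.mp hS₀mem.1
  have hS₀disj : ∀ j, Disjoint S₀ (Y j) := hS₀mem.2.1
  obtain ⟨k₀, hk₀aff, hk₀lt⟩ := hS₀mem.2.2
  -- minimality consequence
  have hminprop : ∀ k (S' : Finset G), S' ⊆ S₀ → tot c S' ≤ B k → ∀ g ∈ S',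
      tot (v k) (S'.erase g) ≤ tot (v k) (Y k) := by
    intro k S' hsub haff' g hg
    by_contra hgt
    push_neg at hgt
    have herW : S'.erase g ⊆ W := ((erase_subset _ _).trans hsub).trans hS₀W
    have heraff : tot c (S'.erase g) ≤ B k := by
      refine le_trans (tot_mono (erase_subset _ _) ?_) haff'
      intro x hx
      exact hc x (hW (hsub.trans hS₀W (by exact hx)))
    have hmem' : S'.erase g ∈ 𝒮 := by
      rw [h𝒮, mem_filter]
      refine ⟨mem_powerset.mpr herW, ?_, k, heraff, hgt⟩
      intro j
      exact Finset.disjoint_of_subset_left ((erase_subset _ _).trans hsub) (hS₀disj j)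
    have hcard := hmin _ hmem'
    have h1 : (S'.erase g).card < S'.card :=
      Finset.card_erase_lt_of_mem hg
    have h2 : S'.card ≤ S₀.card := Finset.card_le_card hsub
    omega
  -- the improved allocation
  set Y' := Function.update Y k₀ S₀ with hY'def
  have hY'k₀ : Y' k₀ = S₀ := Function.update_self _ _ _
  have hY'ne : ∀ k, k ≠ k₀ → Y' k = Y k := fun k hk => Function.update_of_ne hk _ _
  have hYle : ∀ k, tot (v k) (Y k) ≤ tot (v k) (Y' k) := by
    intro k
    by_cases hk : k = k₀
    · subst hk; rw [hY'k₀]; exact le_of_lt hk₀lt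
    · rw [hY'ne k hk]
  have hgood' : Good c B v W Y' := by
    refine ⟨?_, ?_, ?_, ?_⟩
    · intro k
      by_cases hk : k = k₀
      · subst hk; rw [hY'k₀]; exact hS₀W
      · rw [hY'ne k hk]; exact hY.1 k
    · intro a b hab
      by_cases ha : a = k₀
      · subst ha
        rw [hY'k₀, hY'ne b (fun e => hab e.symm)]
        exact hS₀disj b
      · by_cases hb : b = k₀
        · subst hb
          rw [hY'k₀, hY'ne a ha]
          exact (hS₀disj a).symm
        · rw [hY'ne a ha, hY'ne b hb]
          exact hY.2.1 a b hab
    · intro k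
      by_cases hk : k = k₀
      · subst hk; rw [hY'k₀]; exact hk₀aff
      · rw [hY'ne k hk]; exact hY.2.2.1 k
    · intro a b S' hS' haff' g hg
      by_cases hb : b = k₀
      · subst hb
        rw [hY'k₀] at hS'
        exact le_trans (hminprop a S' hS' haff' g hg) (hYle a)
      · rw [hY'ne b hb] at hS'
        exact le_trans (hY.2.2.2 a b S' hS' haff' g hg) (hYle a)
  have hsum := hmax Y' hgood'
  have he : ∀ k, tot (v k) (Y' k) =
      Function.update (fun k => tot (v k) (Y k)) k₀ (tot (v k₀) S₀) k := by
    intro k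
    by_cases hk : k = k₀
    · subst hk; rw [hY'k₀, Function.update_self]
    · rw [hY'ne k hk, Function.update_of_ne hk]
  have hsum1 : (∑ k, tot (v k) (Y' k)) =
      tot (v k₀) S₀ + ∑ k ∈ (univ : Finset (Fin 3)) \ {k₀}, tot (v k) (Y k) := by
    rw [Finset.sum_congr rfl (fun k _ => he k)]
    exact Finset.sum_update_of_mem (mem_univ k₀) _ _
  have hsum2 : (∑ k, tot (v k) (Y k)) =
      (∑ k ∈ (univ : Finset (Fin 3)) \ {k₀}, tot (v k) (Y k)) + tot (v k₀) (Y k₀) :=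
    Finset.sum_eq_sum_sdiff_singleton_add (mem_univ k₀) _
  rw [hsum1, hsum2] at hsum
  linarith

/-- Key induction: for every pool `W ⊆ M`, there is a budget-feasible EFx allocation
inside `W` giving each agent at least a `1/7` fraction of the value of their
OPT-bundle restricted to `W`. -/
lemma main_claim (M : Finset G) (c : G → ℝ) (B : Fin 3 → ℝ) (v : Fin 3 → G → ℝ)
    (hc : ∀ g ∈ M, 0 ≤ c g) (hB : ∀ i, 0 ≤ B i) (hv : ∀ i, ∀ g ∈ M, 0 ≤ v i g)
    (OPT : Fin 3 → Finset G) (hOPT : IsAlloc M c B OPT) :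
    ∀ W : Finset G, W ⊆ M →
      ∃ Z, Good c B v W Z ∧ ∀ i, tot (v i) (OPT i ∩ W) ≤ 7 * tot (v i) (Z i) := by
  classical
  intro W
  induction W using Finset.strongInductionOn with
  | _ W ih =>
    intro hWM
    by_cases hbig : ∃ i, ∃ h ∈ OPT i ∩ W, tot (v i) (OPT i ∩ W) < 7 * v i h
    · obtain ⟨i, h, hmem, hlt⟩ := hbig
      have hhO : h ∈ OPT i := (mem_inter.mp hmem).1
      have hhW : h ∈ W := (mem_inter.mp hmem).2
      have hhM : h ∈ M := hOPT.1 i hhO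
      obtain ⟨Z', hZ'good, hZ'val⟩ :=
        ih (W.erase h) (Finset.erase_ssubset hhW) ((erase_subset _ _).trans hWM)
      have hinterk : ∀ k, k ≠ i → OPT k ∩ W.erase h = OPT k ∩ W := by
        intro k hk
        ext x
        simp only [mem_inter, Finset.mem_erase]
        constructor
        · rintro ⟨hxO, _, hxW⟩; exact ⟨hxO, hxW⟩
        · rintro ⟨hxO, hxW⟩
          refine ⟨hxO, ?_, hxW⟩
          rintro rfl
          exact (Finset.disjoint_left.mp (hOPT.2.1 i k (fun e => hk e.symm)) hhO) hxO
      have hZ'W : ∀ k, Z' k ⊆ W := fun k => (hZ'good.1 k).trans (erase_subset _ _)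
      by_cases hZi : v i h ≤ tot (v i) (Z' i)
      · refine ⟨Z', ⟨hZ'W, hZ'good.2.1, hZ'good.2.2.1, hZ'good.2.2.2⟩, ?_⟩
        intro k
        by_cases hk : k = i
        · subst hk
          calc tot (v k) (OPT k ∩ W) ≤ 7 * v k h := le_of_lt hlt
          _ ≤ 7 * tot (v k) (Z' k) := by linarith
        · rw [← hinterk k hk]; exact hZ'val k
      · push_neg at hZi
        set Z := Function.update Z' i {h} with hZdef
        have hZi' : Z i = {h} := Function.update_self _ _ _
        have hZk : ∀ k, k ≠ i → Z k = Z' k := fun k hk => Function.update_of_ne hk _ _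
        have hnotmem : ∀ k, h ∉ Z' k := by
          intro k hcon
          exact (Finset.notMem_erase h W) (hZ'good.1 k hcon)
        have hZsubW : ∀ k, Z k ⊆ W := by
          intro k
          by_cases hk : k = i
          · subst hk; rw [hZi']; exact Finset.singleton_subset_iff.mpr hhW
          · rw [hZk k hk]; exact hZ'W k
        have hZsubM : ∀ k, Z k ⊆ M := fun k => (hZsubW k).trans hWM
        refine ⟨Z, ⟨hZsubW, ?_, ?_, ?_⟩, ?_⟩
        · -- disjointness
          intro a b hab
          by_cases ha : a = i
          · subst ha
            rw [hZi', hZk b (fun e => hab e.symm)]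
            exact Finset.disjoint_singleton_left.mpr (hnotmem b)
          · by_cases hb : b = i
            · subst hb
              rw [hZi', hZk a ha]
              exact (Finset.disjoint_singleton_left.mpr (hnotmem a)).symm
            · rw [hZk a ha, hZk b hb]
              exact hZ'good.2.1 a b hab
        · -- budgets
          intro k
          by_cases hk : k = i
          · subst hk
            rw [hZi']
            have h1 : tot c {h} = c h := Finset.sum_singleton _ _
            have h2 : c h ≤ tot c (OPT k) :=
              Finset.single_le_sum (fun g hg => hc g (hOPT.1 k hg)) hhO
            rw [h1]
            exact h2.trans (hOPT.2.2 k)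
          · rw [hZk k hk]; exact hZ'good.2.2.1 k
        · -- EFx
          intro a b S hSb haffS g hgS
          have hZa_nonneg : 0 ≤ tot (v a) (Z a) :=
            tot_nonneg (fun x hx => hv a x (hZsubM a hx))
          by_cases hb : b = i
          · subst hb
            rw [hZi'] at hSb
            rcases Finset.subset_singleton_iff.mp hSb with rfl | rfl
            · exact absurd hgS (Finset.notMem_empty g)
            · have : g = h := Finset.mem_singleton.mp hgS
              subst this
              rw [Finset.erase_singleton]
              simpa [tot] using hZa_nonneg
          · rw [hZk b hb] at hSb
            have hstep := hZ'good.2.2.2 a b S hSb haffS g hgS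
            by_cases ha : a = i
            · subst ha
              rw [hZi']
              have : tot (v a) {h} = v a h := Finset.sum_singleton _ _
              rw [this]
              exact hstep.trans (le_of_lt hZi)
            · rw [hZk a ha]; exact hstep
        · -- values
          intro k
          by_cases hk : k = i
          · subst hk
            rw [hZi']
            have : tot (v k) {h} = v k h := Finset.sum_singleton _ _
            rw [this]
            exact le_of_lt hlt
          · rw [hZk k hk, ← hinterk k hk]
            exact hZ'val k
    · -- all goods are "small"
      push_neg at hbig
      obtain ⟨Y, hYgood, hYmax⟩ := exists_max c B v W hB
      have hpool := pool_free M c B v hc W hWM Y hYgood hYmax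
      refine ⟨Y, hYgood, ?_⟩
      intro i
      set X := OPT i ∩ W with hXdef
      have hXW : X ⊆ W := inter_subset_right
      have hXO : X ⊆ OPT i := inter_subset_left
      have hYiM : Y i ⊆ M := (hYgood.1 i).trans hWM
      have hYi_nonneg : 0 ≤ tot (v i) (Y i) :=
        tot_nonneg (fun x hx => hv i x (hYiM hx))
      have hX_nonneg : 0 ≤ tot (v i) X :=
        tot_nonneg (fun x hx => hv i x (hWM (hXW hx)))
      -- uniform piece bound for pieces inside some bundle Y j
      have piece : ∀ (j : Fin 3) (S : Finset G), S ⊆ Y j → S ⊆ OPT i →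
          tot (v i) S ≤ tot (v i) (Y i) + tot (v i) X / 7 := by
        intro j S hSY hSO
        rcases S.eq_empty_or_nonempty with rfl | hne
        · have : tot (v i) (∅ : Finset G) = 0 := by simp [tot]
          rw [this]
          have : 0 ≤ tot (v i) X / 7 := by linarith
          linarith
        · obtain ⟨hm, hhm, hmaxv⟩ := S.exists_max_image (v i) hne
          have haffS : tot c S ≤ B i := by
            refine le_trans (tot_mono hSO (fun g hg => hc g (hOPT.1 i hg))) (hOPT.2.2 i)
          have hEFx := hYgood.2.2.2 i j S hSY haffS hm hhm
          have hsumS : tot (v i) (S.erase hm) + v i hm = tot (v i) S :=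
            Finset.sum_erase_add S _ hhm
          have hmX : hm ∈ OPT i ∩ W := mem_inter.mpr ⟨hSO hhm, (hYgood.1 j) (hSY hhm)⟩
          have hb := hbig i hm hmX
          linarith
      -- decompose X along Y 0, Y 1, Y 2 and the pool
      have e1 : tot (v i) (X ∩ Y 0) + tot (v i) (X \ Y 0) = tot (v i) X :=
        Finset.sum_inter_add_sum_sdiff _ _ _
      have e2 : tot (v i) ((X \ Y 0) ∩ Y 1) + tot (v i) ((X \ Y 0) \ Y 1) =
          tot (v i) (X \ Y 0) := Finset.sum_inter_add_sum_sdiff _ _ _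
      have e3 : tot (v i) (((X \ Y 0) \ Y 1) ∩ Y 2) + tot (v i) (((X \ Y 0) \ Y 1) \ Y 2) =
          tot (v i) ((X \ Y 0) \ Y 1) := Finset.sum_inter_add_sum_sdiff _ _ _
      have b0 : tot (v i) (X ∩ Y 0) ≤ tot (v i) (Y i) + tot (v i) X / 7 :=
        piece 0 _ inter_subset_right (inter_subset_left.trans hXO)
      have b1 : tot (v i) ((X \ Y 0) ∩ Y 1) ≤ tot (v i) (Y i) + tot (v i) X / 7 :=
        piece 1 _ inter_subset_right ((inter_subset_left.trans (sdiff_subset)).trans hXO)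
      have b2 : tot (v i) (((X \ Y 0) \ Y 1) ∩ Y 2) ≤ tot (v i) (Y i) + tot (v i) X / 7 :=
        piece 2 _ inter_subset_right
          ((inter_subset_left.trans ((sdiff_subset).trans (sdiff_subset))).trans hXO)
      -- the leftover piece lies in the pool
      set P := ((X \ Y 0) \ Y 1) \ Y 2 with hPdef
      have hPX : P ⊆ X := (sdiff_subset.trans sdiff_subset).trans sdiff_subset
      have hPmem : ∀ x ∈ P, x ∈ X ∧ x ∉ Y 0 ∧ x ∉ Y 1 ∧ x ∉ Y 2 := by
        intro x hx
        have h2 := Finset.mem_sdiff.mp hx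
        have h1 := Finset.mem_sdiff.mp h2.1
        have h0 := Finset.mem_sdiff.mp h1.1
        exact ⟨h0.1, h0.2, h1.2, h2.2⟩
      have hPdisj : ∀ j, Disjoint P (Y j) := by
        intro j
        rw [Finset.disjoint_left]
        intro x hx hxY
        obtain ⟨_, h0, h1, h2⟩ := hPmem x hx
        fin_cases j
        · exact h0 hxY
        · exact h1 hxY
        · exact h2 hxY
      have haffP : tot c P ≤ B i :=
        le_trans (tot_mono (hPX.trans hXO) (fun g hg => hc g (hOPT.1 i hg))) (hOPT.2.2 i)
      have bP : tot (v i) P ≤ tot (v i) (Y i) :=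
        hpool i P (hPX.trans hXW) hPdisj haffP
      linarith

end EfxProof

theorem efx_three_agents_constant_nsw [DecidableEq G] (M : Finset G) (c : G → ℝ)
    (B : Fin 3 → ℝ) (v : Fin 3 → G → ℝ)
    (hc : ∀ g ∈ M, 0 ≤ c g) (hB : ∀ i, 0 ≤ B i) (hv : ∀ i, ∀ g ∈ M, 0 ≤ v i g)
    (OPT : Fin 3 → Finset G) (hOPT : IsAlloc M c B OPT)
    (hOPTmax : ∀ X : Fin 3 → Finset G, IsAlloc M c B X → NSW v X ≤ NSW v OPT) :
    ∃ Y : Fin 3 → Finset G,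
      IsAlloc M c B Y ∧ IsEFx c B v Y ∧
      (1 / 171) * NSW v OPT ≤ NSW v Y := by
  classical
  obtain ⟨Z, hZgood, hZval⟩ :=
    EfxProof.main_claim M c B v hc hB hv OPT hOPT M (subset_refl M)
  have hOM : ∀ i, OPT i ∩ M = OPT i := fun i => inter_eq_left.mpr (hOPT.1 i)
  have hZM : ∀ i, Z i ⊆ M := hZgood.1
  have hval : ∀ i, tot (v i) (OPT i) ≤ 7 * tot (v i) (Z i) := by
    intro i
    have := hZval i
    rwa [hOM i] at this
  refine ⟨Z, ⟨hZM, hZgood.2.1, hZgood.2.2.1⟩, hZgood.2.2.2, ?_⟩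
  -- NSW computation
  have hZnn : ∀ i, 0 ≤ tot (v i) (Z i) :=
    fun i => EfxProof.tot_nonneg (fun g hg => hv i g (hZM i hg))
  have hAnn : ∀ i, 0 ≤ tot (v i) (OPT i) :=
    fun i => EfxProof.tot_nonneg (fun g hg => hv i g (hOPT.1 i hg))
  set PA := ∏ i, tot (v i) (OPT i) with hPA
  set PZ := ∏ i, tot (v i) (Z i) with hPZ
  have hPAnn : 0 ≤ PA := Finset.prod_nonneg (fun i _ => hAnn i)
  have hPZnn : 0 ≤ PZ := Finset.prod_nonneg (fun i _ => hZnn i)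
  have hprod : PA ≤ 343 * PZ := by
    have h1 : PA ≤ ∏ i, (7 * tot (v i) (Z i)) :=
      Finset.prod_le_prod (fun i _ => hAnn i) (fun i _ => hval i)
    have h2 : (∏ i : Fin 3, (7 * tot (v i) (Z i))) = 343 * PZ := by
      rw [Finset.prod_mul_distrib, Finset.prod_const]
      norm_num [Finset.card_univ]
      exact hPZ.symm
    linarith [h1, h2.le, h2.ge]
  have hexp : ((1 : ℝ) / ((3 : ℕ) : ℝ)) = (1 : ℝ) / 3 := by norm_num
  have hNOPT : NSW v OPT = PA ^ ((1 : ℝ) / 3) := by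
    unfold NSW
    rw [hexp]
  have hNZ : NSW v Z = PZ ^ ((1 : ℝ) / 3) := by
    unfold NSW
    rw [hexp]
  have h343 : ((343 : ℝ)) ^ ((1 : ℝ) / 3) = 7 := by
    have h7 : (343 : ℝ) = (7 : ℝ) ^ ((3 : ℕ) : ℝ) := by
      rw [Real.rpow_natCast]; norm_num
    rw [h7, ← Real.rpow_mul (by norm_num : (0 : ℝ) ≤ 7)]
    norm_num
  have hkey : PA ^ ((1 : ℝ) / 3) ≤ 7 * PZ ^ ((1 : ℝ) / 3) := by
    calc PA ^ ((1 : ℝ) / 3) ≤ (343 * PZ) ^ ((1 : ℝ) / 3) :=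
          Real.rpow_le_rpow hPAnn hprod (by norm_num)
    _ = (343 : ℝ) ^ ((1 : ℝ) / 3) * PZ ^ ((1 : ℝ) / 3) :=
          Real.mul_rpow (by norm_num) hPZnn
    _ = 7 * PZ ^ ((1 : ℝ) / 3) := by rw [h343]
  have hZpnn : 0 ≤ PZ ^ ((1 : ℝ) / 3) := Real.rpow_nonneg hPZnn _
  rw [hNOPT, hNZ]
  linarith
end
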